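/- arXiv:2404.17188 — 12 statements merged into one kernel-verified Lean document; each statement's English description precedes it below -/
import Mathlib

section
/- Let (p_n)_{n≥1} and (q_n)_{n≥1} be sequences of nonnegative integers with q_n ≤ p_n for all n ≥ 1. Define integer sequences (a_n) and (b_n) by a_0 = b_0 = 1 and, for n ≥ 1, a_n = (Σ_{i=0}^{n-1} a_i a_{n-1-i}) − p_n + [n = 1] and b_n = (Σ_{i=0}^{n-1} b_i b_{n-1-i}) − q_n + [n = 1], where [n = 1] equals 1 if n = 1 and 0 otherwise. If a_n > 0 for all n, then a_n ≤ b_n for all n ≥ 0. -/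
/-- Inductive comparison principle: if integer sequences `a`, `b` satisfy the same
Catalan-type convolution recurrence except that `a` subtracts a termwise larger
nonnegative correction (`0 ≤ q n ≤ p n`), and `a` stays positive, then `a n ≤ b n`
for all `n`. -/
theorem hipster_comparison_principle
    (p q : ℕ → ℤ)
    (hq_nonneg : ∀ n, 1 ≤ n → 0 ≤ q n)
    (hqp : ∀ n, 1 ≤ n → q n ≤ p n)
    (a b : ℕ → ℤ)
    (ha0 : a 0 = 1) (hb0 : b 0 = 1)
    (ha : ∀ n, 1 ≤ n →
      a n = (∑ i ∈ Finset.range n, a i * a (n - 1 - i)) - p n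
              + (if n = 1 then 1 else 0))
    (hb : ∀ n, 1 ≤ n →
      b n = (∑ i ∈ Finset.range n, b i * b (n - 1 - i)) - q n
              + (if n = 1 then 1 else 0))
    (ha_pos : ∀ n, 0 < a n) :
    ∀ n, a n ≤ b n := by
  intro n
  induction n using Nat.strong_induction_on with
  | _ n ih =>
    match n with
    | 0 => rw [ha0, hb0]
    | Nat.succ m =>
      have h1 : 1 ≤ m + 1 := Nat.succ_le_succ (Nat.zero_le m)
      rw [ha _ h1, hb _ h1]
      have hsum : (∑ i ∈ Finset.range (m+1), a i * a (m + 1 - 1 - i))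
          ≤ ∑ i ∈ Finset.range (m+1), b i * b (m + 1 - 1 - i) := by
        apply Finset.sum_le_sum
        intro i hi
        have hi' : i < m + 1 := Finset.mem_range.mp hi
        have hj : m + 1 - 1 - i < m + 1 := by omega
        have h1 := ih i hi'
        have h2 := ih _ hj
        have p1 := ha_pos i
        have p2 := ha_pos (m + 1 - 1 - i)
        nlinarith
      have := hqp _ h1
      omega
end

section
/- For all n ≥ 0, the binary hipster numbers satisfy 0 < h_n ≤ c_n, where c_n is the n-th Catalan number. -/
/-! Strong induction on `n`. If `0 < h i ≤ c i` for `i < n`, then `h n = S - d` with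
`S = ∑ h i * h (n - 1 - i) ≤ ∑ c i * c (n - 1 - i) = c n` and `d = [n odd] h m - [n = 1]`,
`m = (n - 1) / 2`. Now `0 ≤ d` since `h m ≥ 1`, and `d < S` since for `n = 2m + 1 ≥ 3` the
middle summand `h m * h m` of `S` is already at least `h m` and the outer summands are positive. -/

open Finset

section ReflectedSum

variable {R : Type*} [Semiring R] [PartialOrder R]

theorem sum_range_mul_reflect_le [IsOrderedRing R] {f g : ℕ → R} {n : ℕ}
    (hf : ∀ i < n, 0 ≤ f i) (hfg : ∀ i < n, f i ≤ g i) :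
    ∑ i ∈ range n, f i * f (n - 1 - i) ≤ ∑ i ∈ range n, g i * g (n - 1 - i) := by
  refine sum_le_sum fun i hi => ?_
  have hi : i < n := mem_range.mp hi
  have hj : n - 1 - i < n := by omega
  exact mul_le_mul (hfg i hi) (hfg _ hj) (hf _ hj) ((hf i hi).trans (hfg i hi))

theorem sum_range_mul_reflect_pos [IsStrictOrderedRing R] {f : ℕ → R} {n : ℕ} (hn : 0 < n)
    (hf : ∀ i < n, 0 < f i) : 0 < ∑ i ∈ range n, f i * f (n - 1 - i) :=
  sum_pos (fun i hi => mul_pos (hf i (mem_range.mp hi)) (hf _ (by simp at hi; omega)))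
    ⟨0, mem_range.mpr hn⟩

theorem lt_sum_range_mul_reflect [IsStrictOrderedRing R] {f : ℕ → R} {n m : ℕ} (hm : 0 < m)
    (hn : n = 2 * m + 1) (hf : ∀ i < n, 1 ≤ f i) :
    f m < ∑ i ∈ range n, f i * f (n - 1 - i) := by
  have hf0 : ∀ i < n, 0 ≤ f i := fun i hi => zero_le_one.trans (hf i hi)
  have hpair : f 0 * f (2 * m) + f m * f m ≤ ∑ i ∈ range n, f i * f (n - 1 - i) := by
    have hsub : {0, m} ⊆ range n := by
      intro i hi; simp only [mem_insert, mem_singleton] at hi; simp only [mem_range]; omega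
    have hnonneg : ∀ i ∈ range n, i ∉ ({0, m} : Finset ℕ) → 0 ≤ f i * f (n - 1 - i) :=
      fun i hi _ => mul_nonneg (hf0 i (mem_range.mp hi)) (hf0 _ (by simp at hi; omega))
    have hfirst : n - 1 - 0 = 2 * m := by omega
    have hmid : n - 1 - m = m := by omega
    simpa only [sum_pair hm.ne, hfirst, hmid] using sum_le_sum_of_subset_of_nonneg hsub hnonneg
  have hout : 0 < f 0 * f (2 * m) :=
    mul_pos (zero_lt_one.trans_le (hf 0 (by omega))) (zero_lt_one.trans_le (hf _ (by omega)))
  have hsq : f m ≤ f m * f m := le_mul_of_one_le_left (hf0 m (by omega)) (hf m (by omega))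
  calc f m < f 0 * f (2 * m) + f m * f m := lt_add_of_pos_of_le hout hsq
    _ ≤ _ := hpair

end ReflectedSum

/-- For all `n ≥ 0`, the binary hipster numbers satisfy `0 < h n ≤ c n`,
where `c n` is the `n`-th Catalan number. -/
theorem binary_hipster_le_catalan
    (c h : ℕ → ℤ)
    (hc0 : c 0 = 1)
    (hc : ∀ n, 1 ≤ n → c n = ∑ i ∈ Finset.range n, c i * c (n - 1 - i))
    (hh0 : h 0 = 1)
    (hh : ∀ n, 1 ≤ n →
      h n = (∑ i ∈ Finset.range n, h i * h (n - 1 - i))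
              - (if Odd n then h ((n - 1) / 2) else 0)
              + (if n = 1 then 1 else 0)) :
    ∀ n, 0 < h n ∧ h n ≤ c n := by
  intro n
  induction n using Nat.strong_induction_on with
  | _ n ih =>
  obtain rfl | hn := Nat.eq_zero_or_pos n
  · simp [hh0, hc0]
  have hpos : ∀ i < n, 0 < h i := fun i hi => (ih i hi).1
  set S := ∑ i ∈ range n, h i * h (n - 1 - i)
  set d := (if Odd n then h ((n - 1) / 2) else 0) - (if n = 1 then 1 else 0)
  have hhn : h n = S - d := by rw [hh n hn]; ring
  have hd_bounds : 0 ≤ d ∧ d < S := by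
    by_cases hodd : Odd n
    · by_cases hn1 : n = 1
      · subst hn1; simp [d, S, hh0]
      · have hn_eq : n = 2 * ((n - 1) / 2) + 1 := by obtain ⟨k, rfl⟩ := hodd; omega
        have hm := hpos ((n - 1) / 2) (by omega)
        have hlt := lt_sum_range_mul_reflect (by omega) hn_eq
          fun i hi => Order.one_le_iff_pos.mpr (hpos i hi)
        simp only [d, if_pos hodd, if_neg hn1]
        omega
    · have hn1 : n ≠ 1 := by rintro rfl; exact hodd odd_one
      simp only [d, if_neg hodd, if_neg hn1]
      exact ⟨le_rfl, sum_range_mul_reflect_pos hn hpos⟩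
  have hS : S ≤ c n :=
    hc n hn ▸ sum_range_mul_reflect_le (fun i hi => (hpos i hi).le) fun i hi => (ih i hi).2
  constructor <;> linarith
end

section
/- For all n ≥ 0, 0 < f_n and f_n ≤ h_n, where (f_n) is the sequence obtained from the binary hipster recurrence by replacing the subtracted h-term with the corresponding Catalan number. -/
/-!
Both `f` and `h` solve `X = x (X² − S(x²) + 1) + 1`, with `S = C` for `f` and `S = H` for `h`,
and `C` solves the same equation with `S = 1`. Since `x X²` has nonnegative coefficients that are
monotone in those of `X`, a larger subtracted series gives a smaller solution, as long as the
smaller solution stays nonnegative. So `h ≤ c` once `h > 0`, and then `f ≤ h` once `f > 0`.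

Positivity of `h` comes from the middle term `h_k²` of the convolution dominating the subtracted
`h_k`. Positivity of `f` is subtler, since `c_k` is subtracted: one shows simultaneously that
`c_k ≤ f_{2k}` (compare the odd-index part of the convolution of `f` with that of `c`) and
`f_{2k} ≤ f_{2k+1}` (the two outer terms of the convolution give `f_{2k+1} ≥ 2 f_{2k} − c_k`).
-/

open Finset

/-- The coefficient of `xⁿ` in `x A(x)²`, where `A` is the generating function of `a`. -/
def selfConv (a : ℕ → ℤ) (n : ℕ) : ℤ := ∑ i ∈ range n, a i * a (n - 1 - i)

theorem selfConv_one (a : ℕ → ℤ) : selfConv a 1 = a 0 * a 0 := by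
  simp [selfConv]

theorem selfConv_mono {a b : ℕ → ℤ} {n : ℕ} (ha : ∀ i < n, 0 ≤ a i) (hab : ∀ i < n, a i ≤ b i) :
    selfConv a n ≤ selfConv b n :=
  sum_le_sum fun i hi => by
    have hi : i < n := mem_range.mp hi
    exact mul_le_mul (hab i hi) (hab _ (by omega)) (ha _ (by omega)) ((ha i hi).trans (hab i hi))

theorem add_le_selfConv {a : ℕ → ℤ} {n i j : ℕ} (ha : ∀ i < n, 0 ≤ a i) (hi : i < n) (hj : j < n)
    (hij : i ≠ j) : a i * a (n - 1 - i) + a j * a (n - 1 - j) ≤ selfConv a n := by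
  rw [← sum_pair (f := fun l => a l * a (n - 1 - l)) hij]
  refine sum_le_sum_of_subset_of_nonneg (by simp [insert_subset_iff, hi, hj]) fun l hl _ => ?_
  have hl : l < n := mem_range.mp hl
  exact mul_nonneg (ha l hl) (ha _ (by omega))

/-- Only the terms `a (2j+1) * a (2(k-1-j))` of `selfConv a (2k)` are used. -/
theorem selfConv_le_selfConv_two_mul {a b : ℕ → ℤ} {k : ℕ} (ha : ∀ i < 2 * k, 0 ≤ a i)
    (hb : ∀ j < k, 0 ≤ b j) (hb_even : ∀ j < k, b j ≤ a (2 * j))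
    (hb_odd : ∀ j < k, b j ≤ a (2 * j + 1)) : selfConv b k ≤ selfConv a (2 * k) := by
  calc selfConv b k
      ≤ ∑ j ∈ range k, a (2 * j + 1) * a (2 * k - 1 - (2 * j + 1)) := sum_le_sum fun j hj => by
        have hj : j < k := mem_range.mp hj
        rw [show 2 * k - 1 - (2 * j + 1) = 2 * (k - 1 - j) by omega]
        exact mul_le_mul (hb_odd j hj) (hb_even _ (by omega)) (hb _ (by omega)) (ha _ (by omega))
    _ = ∑ i ∈ (range k).image (2 * · + 1), a i * a (2 * k - 1 - i) :=
        (sum_image (f := fun i => a i * a (2 * k - 1 - i)) fun x _ y _ h => by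
          omega).symm
    _ ≤ selfConv a (2 * k) := by
      refine sum_le_sum_of_subset_of_nonneg ?_ fun i hi _ => ?_
      · intro i hi
        simp only [mem_image, mem_range] at hi ⊢
        omega
      · have hi : i < 2 * k := mem_range.mp hi
        exact mul_nonneg (ha i hi) (ha _ (by omega))

theorem le_of_sub_selfConv_le {x y : ℕ → ℤ} (hx : ∀ n, 0 ≤ x n) (h0 : x 0 ≤ y 0)
    (hxy : ∀ n, 1 ≤ n → x n - selfConv x n ≤ y n - selfConv y n) : ∀ n, x n ≤ y n := by
  intro n
  induction n using Nat.strong_induction_on with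
  | _ n ih =>
    rcases Nat.eq_zero_or_pos n with rfl | hn
    · exact h0
    · linarith [hxy n hn, selfConv_mono (fun i _ => hx i) ih]

/-- Coefficient form of `X(x) = x (X(x)² − S(x²) + 1) + 1`. -/
def HipsterRecurrence (x s : ℕ → ℤ) : Prop :=
  x 0 = 1 ∧ ∀ n, 1 ≤ n →
    x n = selfConv x n - (if Odd n then s ((n - 1) / 2) else 0) + (if n = 1 then 1 else 0)

namespace HipsterRecurrence

variable {x s : ℕ → ℤ}

theorem eq_one (hx : HipsterRecurrence x s) : x 1 = 2 - s 0 := by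
  rw [hx.2 1 le_rfl, if_pos odd_one, if_pos rfl, selfConv_one, hx.1, Nat.sub_self,
    Nat.zero_div]
  ring

theorem eq_two_mul (hx : HipsterRecurrence x s) {k : ℕ} (hk : 1 ≤ k) :
    x (2 * k) = selfConv x (2 * k) := by
  rw [hx.2 _ (by omega), if_neg (Nat.not_odd_iff_even.mpr (even_two_mul k)), if_neg (by omega)]
  ring

theorem eq_two_mul_add_one (hx : HipsterRecurrence x s) {k : ℕ} (hk : 1 ≤ k) :
    x (2 * k + 1) = selfConv x (2 * k + 1) - s k := by
  rw [hx.2 _ (by omega), if_pos (odd_two_mul_add_one k), if_neg (by omega),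
    show (2 * k + 1 - 1) / 2 = k by omega]
  ring

theorem sub_selfConv_nonpos (hx : HipsterRecurrence x s) (hs0 : 1 ≤ s 0) (hs : ∀ k, 0 ≤ s k)
    {n : ℕ} (hn : 1 ≤ n) : x n - selfConv x n ≤ 0 := by
  rcases eq_or_ne n 1 with rfl | hn1
  · rw [hx.eq_one, selfConv_one, hx.1]
    linarith
  · rw [hx.2 n hn, if_neg hn1]
    split_ifs <;> linarith [hs ((n - 1) / 2)]

theorem sub_selfConv_mono {y t : ℕ → ℤ} (hx : HipsterRecurrence x s) (hy : HipsterRecurrence y t)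
    (hts : ∀ k, t k ≤ s k) {n : ℕ} (hn : 1 ≤ n) :
    x n - selfConv x n ≤ y n - selfConv y n := by
  rw [hx.2 n hn, hy.2 n hn]
  split_ifs <;> linarith [hts ((n - 1) / 2)]

theorem two_mul_sub_one_le (hx : HipsterRecurrence x s) {k : ℕ} (hk : 1 ≤ k)
    (hnonneg : ∀ i < 2 * k, 0 ≤ x i) : 2 * x (2 * k - 1) ≤ x (2 * k) := by
  have hsum := add_le_selfConv hnonneg (i := 0) (j := 2 * k - 1) (by omega) (by omega) (by omega)
  rw [show 2 * k - 1 - (2 * k - 1) = 0 by omega, Nat.sub_zero, hx.1] at hsum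
  linarith [hx.eq_two_mul hk]

theorem pos_of_self (hx : HipsterRecurrence x x) : ∀ n, 0 < x n := by
  intro n
  induction n using Nat.strong_induction_on with
  | _ n ih =>
    have hnonneg : ∀ i < n, 0 ≤ x i := fun i hi => (ih i hi).le
    obtain ⟨k, rfl | rfl⟩ := Nat.even_or_odd' n
    · rcases Nat.eq_zero_or_pos k with rfl | hk
      · simp [hx.1]
      · linarith [hx.two_mul_sub_one_le hk hnonneg, ih (2 * k - 1) (by omega)]
    · rcases Nat.eq_zero_or_pos k with rfl | hk
      · simp [hx.eq_one, hx.1]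
      · have hsum := add_le_selfConv hnonneg (i := k) (j := 0) (by omega) (by omega) (by omega)
        rw [show 2 * k + 1 - 1 - k = k by omega, show 2 * k + 1 - 1 - 0 = 2 * k by omega,
          hx.1] at hsum
        have hxk : 1 ≤ x k := ih k (by omega)
        nlinarith [hx.eq_two_mul_add_one hk, ih (2 * k) (by omega)]

variable {c : ℕ → ℤ}

theorem catalan_le_two_mul (hx : HipsterRecurrence x c)
    (hc : ∀ k, 1 ≤ k → c k ≤ selfConv c k) (hc_nonneg : ∀ k, 0 ≤ c k) {k : ℕ} (hk : 1 ≤ k)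
    (hpos : ∀ i < 2 * k, 1 ≤ x i) (hcx : ∀ j < k, c j ≤ x (2 * j))
    (hstep : ∀ j < k, x (2 * j) ≤ x (2 * j + 1)) : c k ≤ x (2 * k) := by
  rw [hx.eq_two_mul hk]
  exact (hc k hk).trans (selfConv_le_selfConv_two_mul (fun i hi => by linarith [hpos i hi])
    (fun j _ => hc_nonneg j) hcx fun j hj => (hcx j hj).trans (hstep j hj))

theorem le_two_mul_add_one (hx : HipsterRecurrence x c) {k : ℕ} (hk : 1 ≤ k)
    (hnonneg : ∀ i < 2 * k + 1, 0 ≤ x i) (hck : c k ≤ x (2 * k)) : x (2 * k) ≤ x (2 * k + 1) := by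
  have hsum := add_le_selfConv hnonneg (i := 0) (j := 2 * k) (by omega) (by omega) (by omega)
  rw [show 2 * k + 1 - 1 - 0 = 2 * k by omega, show 2 * k + 1 - 1 - 2 * k = 0 by omega,
    hx.1] at hsum
  linarith [hx.eq_two_mul_add_one hk]

theorem one_le_of_catalan (hx : HipsterRecurrence x c) (hc0 : c 0 ≤ 1)
    (hc : ∀ k, 1 ≤ k → c k ≤ selfConv c k) (hc_nonneg : ∀ k, 0 ≤ c k) (n : ℕ) : 1 ≤ x n := by
  suffices ∀ n, 1 ≤ x n ∧ (∀ k, n = 2 * k → c k ≤ x n) ∧ (∀ k, n = 2 * k + 1 → x (2 * k) ≤ x n) from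
    (this n).1
  intro n
  induction n using Nat.strong_induction_on with
  | _ n ih =>
    have hpos : ∀ i < n, 1 ≤ x i := fun i hi => (ih i hi).1
    obtain ⟨k, rfl | rfl⟩ := Nat.even_or_odd' n
    · rcases Nat.eq_zero_or_pos k with rfl | hk
      · simp [hx.1, hc0]
      have hck := hx.catalan_le_two_mul hc hc_nonneg hk hpos
        (fun j hj => (ih (2 * j) (by omega)).2.1 j rfl)
        (fun j hj => (ih (2 * j + 1) (by omega)).2.2 j rfl)
      have hdouble := hx.two_mul_sub_one_le hk fun i hi => by linarith [hpos i hi]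
      refine ⟨?_, fun j hj => (by omega : j = k) ▸ hck, fun j hj => by omega⟩
      linarith [hpos (2 * k - 1) (by omega)]
    · rcases Nat.eq_zero_or_pos k with rfl | hk
      · refine ⟨?_, fun j hj => by omega, fun j hj => ?_⟩
        · linarith [hx.eq_one]
        · rw [show j = 0 by omega, hx.eq_one, hx.1]
          linarith
      have hck : c k ≤ x (2 * k) := (ih (2 * k) (by omega)).2.1 k rfl
      have hstep := hx.le_two_mul_add_one hk (fun i hi => by linarith [hpos i hi]) hck
      refine ⟨by linarith [hpos (2 * k) (by omega)], fun j hj => by omega, fun j hj => ?_⟩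
      rwa [show j = k by omega]

end HipsterRecurrence

/-- For all `n ≥ 0`, `0 < f n` and `f n ≤ h n`, where `f` is obtained from the
binary hipster recurrence by replacing the subtracted `h`-term with the
corresponding Catalan number. -/
theorem binary_hipster_lower_approx
    (c h f : ℕ → ℤ)
    (hc0 : c 0 = 1)
    (hc : ∀ n, 1 ≤ n → c n = ∑ i ∈ Finset.range n, c i * c (n - 1 - i))
    (hh0 : h 0 = 1)
    (hh : ∀ n, 1 ≤ n →
      h n = (∑ i ∈ Finset.range n, h i * h (n - 1 - i))
              - (if Odd n then h ((n - 1) / 2) else 0)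
              + (if n = 1 then 1 else 0))
    (hf0 : f 0 = 1)
    (hf : ∀ n, 1 ≤ n →
      f n = (∑ i ∈ Finset.range n, f i * f (n - 1 - i))
              - (if Odd n then c ((n - 1) / 2) else 0)
              + (if n = 1 then 1 else 0)) :
    ∀ n, 0 < f n ∧ f n ≤ h n := by
  have hrec_h : HipsterRecurrence h h := ⟨hh0, hh⟩
  have hrec_f : HipsterRecurrence f c := ⟨hf0, hf⟩
  have hrec_c : ∀ n, 1 ≤ n → c n = selfConv c n := hc
  have h_pos := hrec_h.pos_of_self
  have h_le_c : ∀ n, h n ≤ c n :=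
    le_of_sub_selfConv_le (fun n => (h_pos n).le) (hh0.trans hc0.symm).le fun n hn => by
      linarith [hrec_h.sub_selfConv_nonpos hh0.ge (fun k => (h_pos k).le) hn, hrec_c n hn]
  have f_pos : ∀ n, 1 ≤ f n := hrec_f.one_le_of_catalan hc0.le (fun k hk => (hrec_c k hk).le)
    fun k => (h_pos k).le.trans (h_le_c k)
  have f_le_h : ∀ n, f n ≤ h n := le_of_sub_selfConv_le (fun n => by linarith [f_pos n])
    (hf0.trans hh0.symm).le fun n hn => hrec_f.sub_selfConv_mono hrec_h h_le_c hn
  exact fun n => ⟨by linarith [f_pos n], f_le_h n⟩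
end

section
/- Let x₁ = (−20 + (6400 − 768√69)^{1/3} + 4·2^{2/3}·(25 + 3√69)^{1/3})/24. Then 0 < x₁ < 1/2 and 3 − 2√(1 − 4x₁²) − 4x₁² − 4x₁ = 0. -/
open Real

lemma cbrt_cube_aux {a : ℝ} (ha : 0 ≤ a) : (a ^ ((1:ℝ)/3)) ^ 3 = a := by
  rw [← Real.rpow_natCast (a ^ ((1:ℝ)/3)) 3, ← Real.rpow_mul ha]
  norm_num

set_option maxHeartbeats 1600000 in
/-- Let `x₁ = (−20 + (6400 − 768√69)^(1/3) + 4·2^(2/3)·(25 + 3√69)^(1/3))/24`.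
Then `0 < x₁ < 1/2` and `3 − 2√(1 − 4x₁²) − 4x₁² − 4x₁ = 0`. -/
theorem binary_hipster_lower_singularity :
    let x₁ : ℝ := (-20 + (6400 - 768 * Real.sqrt 69) ^ ((1 : ℝ) / 3)
        + 4 * (2 : ℝ) ^ ((2 : ℝ) / 3) * (25 + 3 * Real.sqrt 69) ^ ((1 : ℝ) / 3)) / 24
    0 < x₁ ∧ x₁ < 1 / 2 ∧
      3 - 2 * Real.sqrt (1 - 4 * x₁ ^ 2) - 4 * x₁ ^ 2 - 4 * x₁ = 0 := by
  intro x₁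
  have hx : x₁ = (-20 + (6400 - 768 * Real.sqrt 69) ^ ((1 : ℝ) / 3)
      + 4 * (2 : ℝ) ^ ((2 : ℝ) / 3) * (25 + 3 * Real.sqrt 69) ^ ((1 : ℝ) / 3)) / 24 := rfl
  have hr2 : Real.sqrt 69 ^ 2 = 69 := Real.sq_sqrt (by norm_num)
  have hr0 : 0 ≤ Real.sqrt 69 := Real.sqrt_nonneg 69
  have hrl : 8.30 ≤ Real.sqrt 69 := by nlinarith [hr2, hr0]
  have hru : Real.sqrt 69 ≤ 8.3067 := by nlinarith [hr2, hr0]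
  set r := Real.sqrt 69 with hrdef
  have hA : 0 ≤ 6400 - 768 * r := by nlinarith
  have hB : 0 ≤ 25 + 3 * r := by nlinarith
  set u := (6400 - 768 * r) ^ ((1:ℝ)/3) with hudef
  set t := (2:ℝ) ^ ((2:ℝ)/3) with htdef
  set w := (25 + 3 * r) ^ ((1:ℝ)/3) with hwdef
  have hu3 : u ^ 3 = 6400 - 768 * r := cbrt_cube_aux hA
  have hw3 : w ^ 3 = 25 + 3 * r := cbrt_cube_aux hB
  have ht3 : t ^ 3 = 4 := by
    rw [htdef, ← Real.rpow_natCast ((2:ℝ) ^ ((2:ℝ)/3)) 3,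
      ← Real.rpow_mul (by norm_num : (0:ℝ) ≤ 2)]
    norm_num
  have hu0 : 0 ≤ u := Real.rpow_nonneg hA _
  have hw0 : 0 ≤ w := Real.rpow_nonneg hB _
  have ht0 : 0 ≤ t := Real.rpow_nonneg (by norm_num) _
  -- bounds on u, t, w
  have hul : 2 ≤ u := by nlinarith [hu3, sq_nonneg (u - 2), sq_nonneg (u + 2), sq_nonneg u]
  have huu : u ≤ 3 := by nlinarith [hu3, sq_nonneg (u - 3), sq_nonneg (u + 3), sq_nonneg u]
  have hwl : 3.6 ≤ w := by nlinarith [hw3, sq_nonneg (w - 3.6), sq_nonneg (w + 3.6), sq_nonneg w]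
  have hwu : w ≤ 3.7 := by nlinarith [hw3, sq_nonneg (w - 3.7), sq_nonneg (w + 3.7), sq_nonneg w]
  have htl : 1.58 ≤ t := by nlinarith [ht3, sq_nonneg (t - 1.58), sq_nonneg (t + 1.58), sq_nonneg t]
  have htu : t ≤ 1.59 := by nlinarith [ht3, sq_nonneg (t - 1.59), sq_nonneg (t + 1.59), sq_nonneg t]
  -- product identity : u * (4 t w) = 64
  have hprod : u * (4 * t * w) = 64 := by
    have hc : (u * (4 * t * w)) ^ 3 = 64 ^ 3 := by
      have : (u * (4 * t * w)) ^ 3 = u ^ 3 * (64 * (t ^ 3 * w ^ 3)) := by ring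
      rw [this, hu3, ht3, hw3]
      linear_combination (-589824 : ℝ) * hr2
    exact (Odd.strictMono_pow (R := ℝ) (⟨1, by norm_num⟩ : Odd 3)).injective hc
  -- cubic for s = u + 4 t w
  have hs3 : (u + 4 * t * w) ^ 3 = 192 * (u + 4 * t * w) + 12800 := by
    have hexp : (u + 4 * t * w) ^ 3
        = u ^ 3 + 64 * (t ^ 3 * w ^ 3) + 3 * (u * (4 * t * w)) * (u + 4 * t * w) := by ring
    rw [hexp, hu3, ht3, hw3, hprod]
    ring
  have hs : u + 4 * t * w = 24 * x₁ + 20 := by rw [hx]; ring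
  have hxl : 0 < x₁ := by rw [hx]; nlinarith [mul_nonneg (by linarith : (0:ℝ) ≤ t - 1.58) (by linarith : (0:ℝ) ≤ w - 3.6)]
  have hxu : x₁ < 1 / 2 := by rw [hx]; nlinarith [mul_nonneg (by linarith : (0:ℝ) ≤ 1.59 - t) (by linarith : (0:ℝ) ≤ 3.7 - w)]
  have hcube : 8 * x₁ ^ 3 + 20 * x₁ ^ 2 + 14 * x₁ - 5 = 0 := by
    have h : (24 * x₁ + 20) ^ 3 = 192 * (24 * x₁ + 20) + 12800 := by rw [← hs]; exact hs3
    linear_combination h / 1728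
  refine ⟨hxl, hxu, ?_⟩
  have h1 : 1 - 4 * x₁ ^ 2 = ((3 - 4 * x₁ - 4 * x₁ ^ 2) / 2) ^ 2 := by
    linear_combination (-(2 * x₁ - 1) / 4) * hcube
  have h2 : 0 ≤ (3 - 4 * x₁ - 4 * x₁ ^ 2) / 2 := by nlinarith
  rw [h1, Real.sqrt_sq h2]
  ring
end

section
/- The exponential growth rate of the binary hipster numbers satisfies 3.923450 ≤ limsup_{n→∞} h_n^{1/n} ≤ 3.923909. -/
open Filter Finset Topology

private lemma hipCauchyEq (a : ℕ → ℝ) (N : ℕ) :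
    ∑ k ∈ range N, ∑ i ∈ range (k+1), a i * a (k - i)
      = ∑ p ∈ (range N ×ˢ range N).filter (fun p => p.1 + p.2 < N), a p.1 * a p.2 := by
  rw [Finset.sum_sigma']
  refine Finset.sum_nbij' (fun p => (p.2, p.1 - p.2)) (fun p => ⟨p.1 + p.2, p.1⟩) ?_ ?_ ?_ ?_ ?_
  · intro p hp
    simp only [Finset.mem_sigma, Finset.mem_range] at hp
    simp only [Finset.mem_filter, Finset.mem_product, Finset.mem_range]
    omega
  · intro p hp
    simp only [Finset.mem_filter, Finset.mem_product, Finset.mem_range] at hp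
    simp only [Finset.mem_sigma, Finset.mem_range]
    omega
  · intro p hp
    simp only [Finset.mem_sigma, Finset.mem_range] at hp
    ext
    · simp; omega
    · simp
  · intro p hp; simp
  · intro p hp
    simp only [Finset.mem_sigma, Finset.mem_range] at hp
    simp

private lemma hipCauchyUB (a : ℕ → ℝ) (ha : ∀ i, 0 ≤ a i) (N : ℕ) :
    ∑ k ∈ range N, ∑ i ∈ range (k+1), a i * a (k - i) ≤ (∑ i ∈ range N, a i)^2 := by
  rw [hipCauchyEq, sq, Finset.sum_mul_sum, ← Finset.sum_product']
  refine Finset.sum_le_sum_of_subset_of_nonneg (Finset.filter_subset _ _) ?_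
  intro p _ _
  exact mul_nonneg (ha _) (ha _)

private lemma hipCauchyLB (a : ℕ → ℝ) (ha : ∀ i, 0 ≤ a i) (M N : ℕ) (hMN : 2*M + 1 ≤ N) :
    (∑ i ∈ range (M+1), a i)^2 ≤ ∑ k ∈ range N, ∑ i ∈ range (k+1), a i * a (k - i) := by
  rw [hipCauchyEq, sq, Finset.sum_mul_sum, ← Finset.sum_product']
  refine Finset.sum_le_sum_of_subset_of_nonneg ?_ ?_
  · intro p hp
    simp only [Finset.mem_product, Finset.mem_range] at hp
    simp only [Finset.mem_filter, Finset.mem_product, Finset.mem_range]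
    omega
  · intro p _ _
    exact mul_nonneg (ha _) (ha _)

private lemma hipGeomBound (q : ℝ) (h0 : 0 ≤ q) (h1 : q < 1) (n : ℕ) :
    ∑ i ∈ range n, q^i ≤ (1-q)⁻¹ := by
  have hg := geom_sum_mul q n
  have hp : (0:ℝ) ≤ q^n := pow_nonneg h0 n
  have h2 : (0:ℝ) < 1 - q := by linarith
  have hinv : (1-q) * (1-q)⁻¹ = 1 := mul_inv_cancel₀ h2.ne'
  nlinarith [hg, hp, hinv, h2]

set_option maxHeartbeats 2000000 in
/-- The exponential growth rate of the binary hipster numbers satisfies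
`3.923450 ≤ limsup h n ^ (1/n) ≤ 3.923909`. -/
theorem binary_hipster_growth_rate
    (h : ℕ → ℤ)
    (hh0 : h 0 = 1)
    (hh : ∀ n, 1 ≤ n →
      h n = (∑ i ∈ Finset.range n, h i * h (n - 1 - i))
              - (if Odd n then h ((n - 1) / 2) else 0)
              + (if n = 1 then 1 else 0)) :
    3.923450 ≤ Filter.limsup (fun n : ℕ => ((h n : ℝ)) ^ (1 / (n : ℝ))) Filter.atTop ∧
      Filter.limsup (fun n : ℕ => ((h n : ℝ)) ^ (1 / (n : ℝ))) Filter.atTop ≤ 3.923909 := by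
  -- positivity
  have hpos : ∀ n, 1 ≤ h n := by
    intro n
    induction n using Nat.strong_induction_on with
    | _ n ih =>
      match n, ih with
      | 0, _ => omega
      | 1, ih =>
        rw [hh 1 (by norm_num)]
        simp [Finset.sum_range_succ, hh0]
      | (m+2), ih =>
        set n := m + 2 with hn
        rw [hh n (by omega)]
        have hterm : ∀ i ∈ range n, 1 ≤ h i * h (n - 1 - i) := by
          intro i hi
          simp only [Finset.mem_range] at hi
          have h1 := ih i (by omega)
          have h2 := ih (n - 1 - i) (by omega)
          nlinarith
        by_cases hodd : Odd n
        · obtain ⟨m', hm'⟩ := id hodd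
          have hmem : (n-1)/2 ∈ range n := by simp [Finset.mem_range]; omega
          rw [← Finset.sum_erase_add _ _ hmem]
          have hme : n - 1 - (n-1)/2 = (n-1)/2 := by omega
          rw [hme]
          have hrest : ((m:ℤ) + 1) ≤ ∑ i ∈ (range n).erase ((n-1)/2), h i * h (n - 1 - i) := by
            have := Finset.card_nsmul_le_sum ((range n).erase ((n-1)/2))
              (fun i => h i * h (n - 1 - i)) 1 (fun i hi => hterm i (Finset.mem_of_mem_erase hi))
            have hc : ((range n).erase ((n-1)/2)).card = n - 1 := by
              rw [Finset.card_erase_of_mem hmem, Finset.card_range]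
            rw [hc] at this
            have hc2 : n - 1 = m + 1 := by omega
            rw [hc2] at this
            exact_mod_cast by simpa [hc2] using this
          have hm2 := ih ((n-1)/2) (by omega)
          have hn3 : (3:ℤ) ≤ (n:ℤ) := by exact_mod_cast Nat.succ_le_of_lt (by omega)
          simp only [if_pos hodd, if_neg (by omega : ¬ n = 1)]
          push_cast at hrest ⊢
          nlinarith [sq_nonneg (h ((n-1)/2))]
        · have hrest : (n : ℤ) ≤ ∑ i ∈ range n, h i * h (n - 1 - i) := by
            have := Finset.card_nsmul_le_sum (range n) (fun i => h i * h (n - 1 - i)) 1 hterm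
            simpa using this
          simp only [if_neg hodd, if_neg (by omega : ¬ n = 1)]
          have : (2:ℤ) ≤ (n:ℤ) := by exact_mod_cast (by omega : 2 ≤ n)
          omega
  -- explicit values
  have v1 : h 1 = 1 := by
    rw [hh 1 (by norm_num)]
    norm_num [Finset.sum_range_succ, hh0, Nat.odd_iff]
  have v2 : h 2 = 2 := by
    rw [hh 2 (by norm_num)]
    norm_num [Finset.sum_range_succ, hh0, v1, Nat.odd_iff]
  have v3 : h 3 = 4 := by
    rw [hh 3 (by norm_num)]
    norm_num [Finset.sum_range_succ, hh0, v1, v2, Nat.odd_iff]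
  have v4 : h 4 = 12 := by
    rw [hh 4 (by norm_num)]
    norm_num [Finset.sum_range_succ, hh0, v1, v2, v3, Nat.odd_iff]
  have v5 : h 5 = 34 := by
    rw [hh 5 (by norm_num)]
    norm_num [Finset.sum_range_succ, hh0, v1, v2, v3, v4, Nat.odd_iff]
  have v6 : h 6 = 108 := by
    rw [hh 6 (by norm_num)]
    norm_num [Finset.sum_range_succ, hh0, v1, v2, v3, v4, v5, Nat.odd_iff]
  have v7 : h 7 = 344 := by
    rw [hh 7 (by norm_num)]
    norm_num [Finset.sum_range_succ, hh0, v1, v2, v3, v4, v5, v6, Nat.odd_iff]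
  have v8 : h 8 = 1136 := by
    rw [hh 8 (by norm_num)]
    norm_num [Finset.sum_range_succ, hh0, v1, v2, v3, v4, v5, v6, v7, Nat.odd_iff]
  have v9 : h 9 = 3796 := by
    rw [hh 9 (by norm_num)]
    norm_num [Finset.sum_range_succ, hh0, v1, v2, v3, v4, v5, v6, v7, v8, Nat.odd_iff]
  have v10 : h 10 = 12920 := by
    rw [hh 10 (by norm_num)]
    norm_num [Finset.sum_range_succ, hh0, v1, v2, v3, v4, v5, v6, v7, v8, v9, Nat.odd_iff]
  have v11 : h 11 = 44442 := by
    rw [hh 11 (by norm_num)]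
    norm_num [Finset.sum_range_succ, hh0, v1, v2, v3, v4, v5, v6, v7, v8, v9, v10, Nat.odd_iff]
  have v12 : h 12 = 154596 := by
    rw [hh 12 (by norm_num)]
    norm_num [Finset.sum_range_succ, hh0, v1, v2, v3, v4, v5, v6, v7, v8, v9, v10, v11, Nat.odd_iff]
  have v13 : h 13 = 542336 := by
    rw [hh 13 (by norm_num)]
    norm_num [Finset.sum_range_succ, hh0, v1, v2, v3, v4, v5, v6, v7, v8, v9, v10, v11, v12, Nat.odd_iff]
  have v14 : h 14 = 1917648 := by
    rw [hh 14 (by norm_num)]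
    norm_num [Finset.sum_range_succ, hh0, v1, v2, v3, v4, v5, v6, v7, v8, v9, v10, v11, v12, v13, Nat.odd_iff]
  have v15 : h 15 = 6825464 := by
    rw [hh 15 (by norm_num)]
    norm_num [Finset.sum_range_succ, hh0, v1, v2, v3, v4, v5, v6, v7, v8, v9, v10, v11, v12, v13, v14, Nat.odd_iff]
  have v16 : h 16 = 24439008 := by
    rw [hh 16 (by norm_num)]
    norm_num [Finset.sum_range_succ, hh0, v1, v2, v3, v4, v5, v6, v7, v8, v9, v10, v11, v12, v13, v14, v15, Nat.odd_iff]
  have v17 : h 17 = 87962312 := by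
    rw [hh 17 (by norm_num)]
    norm_num [Finset.sum_range_succ, hh0, v1, v2, v3, v4, v5, v6, v7, v8, v9, v10, v11, v12, v13, v14, v15, v16, Nat.odd_iff]
  have v18 : h 18 = 318087216 := by
    rw [hh 18 (by norm_num)]
    norm_num [Finset.sum_range_succ, hh0, v1, v2, v3, v4, v5, v6, v7, v8, v9, v10, v11, v12, v13, v14, v15, v16, v17, Nat.odd_iff]
  have v19 : h 19 = 1155090092 := by
    rw [hh 19 (by norm_num)]
    norm_num [Finset.sum_range_succ, hh0, v1, v2, v3, v4, v5, v6, v7, v8, v9, v10, v11, v12, v13, v14, v15, v16, v17, v18, Nat.odd_iff]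
  have v20 : h 20 = 4210494616 := by
    rw [hh 20 (by norm_num)]
    norm_num [Finset.sum_range_succ, hh0, v1, v2, v3, v4, v5, v6, v7, v8, v9, v10, v11, v12, v13, v14, v15, v16, v17, v18, v19, Nat.odd_iff]
  -- casts and nonnegativity
  have hcast : ∀ n, (0:ℝ) ≤ (h n : ℝ) := by
    intro n
    have := hpos n
    exact_mod_cast (by linarith : (0:ℤ) ≤ h n)
  -- the generating identity
  have key : ∀ (x : ℝ) (N : ℕ), 1 ≤ N →
      ∑ k ∈ range (N+1), ((h k : ℝ) * x^k)
        = 1 + x + x * (∑ k ∈ range N, ∑ i ∈ range (k+1),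
              ((h i : ℝ) * x^i) * ((h (k-i) : ℝ) * x^(k-i)))
          - x * ∑ m ∈ range ((N-1)/2 + 1), (h m : ℝ) * (x^2)^m := by
    intro x N hN
    induction N, hN using Nat.le_induction with
    | base =>
      simp [Finset.sum_range_succ, hh0, v1]
    | succ N hN ih =>
      have hsum : ∑ k ∈ range (N+1+1), ((h k : ℝ) * x^k)
          = (∑ k ∈ range (N+1), ((h k : ℝ) * x^k)) + (h (N+1) : ℝ) * x^(N+1) :=
        Finset.sum_range_succ _ _
      have hrec := hh (N+1) (by omega)
      have hcast2 : (h (N+1) : ℝ) = (∑ i ∈ range (N+1), (h i : ℝ) * (h (N - i) : ℝ))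
          - (if Odd (N+1) then ((h (N/2) : ℝ)) else 0) := by
        rw [hrec]
        simp only [Nat.add_sub_cancel]
        push_cast
        rw [if_neg (by omega : ¬ N = 0), add_zero]
      have hconv : (∑ i ∈ range (N+1), (h i : ℝ) * (h (N - i) : ℝ)) * x^(N+1)
          = x * ∑ i ∈ range (N+1), ((h i : ℝ) * x^i) * ((h (N-i) : ℝ) * x^(N-i)) := by
        rw [Finset.sum_mul, Finset.mul_sum]
        refine Finset.sum_congr rfl ?_
        intro i hi
        simp only [Finset.mem_range] at hi
        have : x^i * x^(N-i) = x^N := by rw [← pow_add]; congr 1; omega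
        calc (h i : ℝ) * (h (N-i) : ℝ) * x^(N+1) = (h i : ℝ) * (h (N-i):ℝ) * (x^N * x) := by
              rw [pow_succ]
          _ = x * ((h i : ℝ) * x^i * ((h (N-i) : ℝ) * x^(N-i))) := by rw [← this]; ring
      have hCnew : ∑ k ∈ range (N+1), ∑ i ∈ range (k+1),
            ((h i : ℝ) * x^i) * ((h (k-i) : ℝ) * x^(k-i))
          = (∑ k ∈ range N, ∑ i ∈ range (k+1),
                ((h i : ℝ) * x^i) * ((h (k-i) : ℝ) * x^(k-i)))
            + ∑ i ∈ range (N+1), ((h i : ℝ) * x^i) * ((h (N-i) : ℝ) * x^(N-i)) :=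
        Finset.sum_range_succ _ _
      rcases Nat.even_or_odd N with hev | hod
      · have hodd1 : Odd (N+1) := Even.add_one hev
        obtain ⟨t, ht⟩ := hev
        have hq1 : (N+1-1)/2 = (N-1)/2 + 1 := by omega
        have hq2 : N/2 = (N-1)/2 + 1 := by omega
        have hQ : ∑ m ∈ range ((N+1-1)/2 + 1), (h m : ℝ) * (x^2)^m
            = (∑ m ∈ range ((N-1)/2 + 1), (h m : ℝ) * (x^2)^m)
              + (h ((N-1)/2 + 1) : ℝ) * (x^2)^((N-1)/2 + 1) := by
          rw [hq1]; exact Finset.sum_range_succ _ _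
        have hxp : x * ((h ((N-1)/2 + 1) : ℝ) * (x^2)^((N-1)/2 + 1))
            = (h (N/2) : ℝ) * x^(N+1) := by
          rw [hq2, ← pow_mul]
          have : 2 * ((N-1)/2 + 1) = N := by omega
          rw [this, pow_succ]
          ring
        rw [hsum, ih, hcast2, if_pos hodd1, sub_mul, hconv, hCnew, hQ]
        rw [mul_add x, mul_add x, hxp, hq2]
        push_cast
        ring
      · obtain ⟨t, ht⟩ := hod
        have hnodd : ¬ Odd (N+1) := by rintro ⟨s, hs⟩; omega
        have hq1 : (N+1-1)/2 = (N-1)/2 := by omega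
        rw [hsum, ih, hcast2, if_neg hnodd, sub_zero, hconv, hCnew, hq1]
        rw [mul_add x]
        ring
  -- nonnegativity of terms
  have hann0 : ∀ k, (0:ℝ) ≤ (h k : ℝ) * ((1000000:ℝ)/3923909)^k := by
    intro k
    exact mul_nonneg (hcast k) (by positivity)
  have hann1 : ∀ k, (0:ℝ) ≤ (h k : ℝ) * ((1000000:ℝ)/3923450)^k := by
    intro k
    exact mul_nonneg (hcast k) (by positivity)
  -- numeric facts
  have hS20 : ∑ k ∈ Finset.range 21, (h k : ℝ) * ((1000000:ℝ)/3923909)^k ≤ ((3923909:ℝ)/2000000) := by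
    simp only [Finset.sum_range_succ, Finset.sum_range_zero, hh0, v1, v2, v3, v4, v5, v6, v7, v8, v9, v10, v11, v12, v13, v14, v15, v16, v17, v18, v19, v20]
    push_cast
    norm_num
  have hQ0 : ((1074652:ℝ)/1000000) ≤ ∑ m ∈ Finset.range 11, (h m : ℝ) * (((1000000:ℝ)/3923909)^2)^m := by
    simp only [Finset.sum_range_succ, Finset.sum_range_zero, hh0, v1, v2, v3, v4, v5, v6, v7, v8, v9, v10]
    push_cast
    norm_num
  have hnumUB : 1 + ((1000000:ℝ)/3923909) + ((1000000:ℝ)/3923909)*((3923909:ℝ)/2000000)^2 - ((1000000:ℝ)/3923909)*((1074652:ℝ)/1000000) ≤ ((3923909:ℝ)/2000000) := by norm_num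
  -- THE UPPER BOUND: partial sums at x0 are bounded by B
  have hub : ∀ N, ∑ k ∈ Finset.range (N+1), (h k : ℝ) * ((1000000:ℝ)/3923909)^k ≤ ((3923909:ℝ)/2000000) := by
    intro N
    induction N using Nat.strong_induction_on with
    | _ N ih =>
      by_cases hle : N ≤ 20
      · refine le_trans (Finset.sum_le_sum_of_subset_of_nonneg
          (Finset.range_subset_range.2 (by omega)) (fun k _ _ => hann0 k)) hS20
      · have hN1 : 1 ≤ N := by omega
        rw [key ((1000000:ℝ)/3923909) N hN1]
        have hC : (∑ k ∈ range N, ∑ i ∈ range (k+1),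
              ((h i : ℝ) * ((1000000:ℝ)/3923909)^i) * ((h (k-i) : ℝ) * ((1000000:ℝ)/3923909)^(k-i)))
            ≤ (∑ k ∈ range N, (h k : ℝ) * ((1000000:ℝ)/3923909)^k)^2 := by
          simpa using hipCauchyUB (fun k => (h k : ℝ) * ((1000000:ℝ)/3923909)^k) hann0 N
        have hSprev := ih (N-1) (by omega)
        rw [show N - 1 + 1 = N from by omega] at hSprev
        have hSnn : (0:ℝ) ≤ ∑ k ∈ range N, (h k : ℝ) * ((1000000:ℝ)/3923909)^k :=
          Finset.sum_nonneg fun k _ => hann0 k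
        have hs2 : (∑ k ∈ range N, (h k : ℝ) * ((1000000:ℝ)/3923909)^k)^2 ≤ ((3923909:ℝ)/2000000)^2 :=
          pow_le_pow_left₀ hSnn hSprev 2
        have hQm : (∑ m ∈ range 11, (h m : ℝ) * (((1000000:ℝ)/3923909)^2)^m)
            ≤ ∑ m ∈ range ((N-1)/2 + 1), (h m : ℝ) * (((1000000:ℝ)/3923909)^2)^m :=
          Finset.sum_le_sum_of_subset_of_nonneg (Finset.range_subset_range.2 (by omega))
            (fun m _ _ => mul_nonneg (hcast m) (by positivity))
        have hx0pos : (0:ℝ) < ((1000000:ℝ)/3923909) := by norm_num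
        have e1' : ((1000000:ℝ)/3923909) * (∑ k ∈ range N, ∑ i ∈ range (k+1),
              ((h i : ℝ) * ((1000000:ℝ)/3923909)^i) * ((h (k-i) : ℝ) * ((1000000:ℝ)/3923909)^(k-i))) ≤ ((1000000:ℝ)/3923909) * ((3923909:ℝ)/2000000)^2 :=
          mul_le_mul_of_nonneg_left (le_trans hC hs2) hx0pos.le
        have e2' : ((1000000:ℝ)/3923909) * ((1074652:ℝ)/1000000) ≤ ((1000000:ℝ)/3923909) * (∑ m ∈ range ((N-1)/2 + 1), (h m : ℝ) * (((1000000:ℝ)/3923909)^2)^m) :=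
          mul_le_mul_of_nonneg_left (le_trans hQ0 hQm) hx0pos.le
        linarith
  -- single-term bound
  have hterm : ∀ n, (h n : ℝ) * ((1000000:ℝ)/3923909)^n ≤ ((3923909:ℝ)/2000000) := by
    intro n
    refine le_trans ?_ (hub n)
    exact Finset.single_le_sum (f := fun k => (h k : ℝ) * ((1000000:ℝ)/3923909)^k)
      (fun i _ => hann0 i) (Finset.self_mem_range_succ n)
  have hBL : ∀ n, (h n : ℝ) ≤ ((3923909:ℝ)/2000000) * ((3923909:ℝ)/1000000)^n := by
    intro n
    have h1 := hterm n
    have h2 : (((1000000:ℝ)/3923909):ℝ)^n * ((3923909:ℝ)/1000000)^n = 1 := by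
      rw [← mul_pow]
      norm_num
    calc (h n : ℝ) = ((h n : ℝ) * ((1000000:ℝ)/3923909)^n) * ((3923909:ℝ)/1000000)^n := by
          rw [mul_assoc, h2, mul_one]
      _ ≤ ((3923909:ℝ)/2000000) * ((3923909:ℝ)/1000000)^n := mul_le_mul_of_nonneg_right h1 (by positivity)
  -- rpow bounds
  have hunn : ∀ n : ℕ, (0:ℝ) ≤ (h n : ℝ) ^ (1/(n:ℝ)) := fun n => Real.rpow_nonneg (hcast n) _
  have huBL : ∀ n, 1 ≤ n → (h n : ℝ) ^ (1/(n:ℝ)) ≤ ((3923909:ℝ)/2000000) ^ (1/(n:ℝ)) * ((3923909:ℝ)/1000000) := by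
    intro n hn
    have step1 : (h n : ℝ) ^ (1/(n:ℝ)) ≤ (((3923909:ℝ)/2000000) * ((3923909:ℝ)/1000000)^n) ^ (1/(n:ℝ)) :=
      Real.rpow_le_rpow (hcast n) (hBL n) (by positivity)
    have step2 : ((((3923909:ℝ)/2000000):ℝ) * ((3923909:ℝ)/1000000)^n) ^ (1/(n:ℝ)) = ((3923909:ℝ)/2000000) ^ (1/(n:ℝ)) * (((3923909:ℝ)/1000000)^n) ^ (1/(n:ℝ)) :=
      Real.mul_rpow (by norm_num) (by positivity)
    have step3 : ((((3923909:ℝ)/1000000):ℝ)^n) ^ (1/(n:ℝ)) = ((3923909:ℝ)/1000000) := by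
      rw [one_div]
      exact Real.pow_rpow_inv_natCast (by norm_num) (by omega)
    rw [step2, step3] at step1
    exact step1
  have hu8 : ∀ n : ℕ, (h n : ℝ) ^ (1/(n:ℝ)) ≤ 8 := by
    intro n
    cases n with
    | zero =>
      rw [hh0]
      push_cast
      rw [Real.one_rpow]
      norm_num
    | succ m =>
      refine le_trans (huBL (m+1) (by omega)) ?_
      have hBpow : (((3923909:ℝ)/2000000):ℝ) ^ (1/((m+1:ℕ):ℝ)) ≤ ((3923909:ℝ)/2000000) := by
        nth_rewrite 2 [show (((3923909:ℝ)/2000000):ℝ) = ((3923909:ℝ)/2000000) ^ (1:ℝ) from (Real.rpow_one _).symm]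
        refine Real.rpow_le_rpow_of_exponent_le (by norm_num) ?_
        rw [div_le_one (by positivity)]
        exact_mod_cast Nat.succ_le_succ (Nat.zero_le m)
      have : (((3923909:ℝ)/2000000):ℝ) ^ (1/((m+1:ℕ):ℝ)) * ((3923909:ℝ)/1000000) ≤ ((3923909:ℝ)/2000000) * ((3923909:ℝ)/1000000) :=
        mul_le_mul_of_nonneg_right hBpow (by norm_num)
      refine le_trans this (by norm_num)
  have hbdd : Filter.IsBoundedUnder (· ≤ ·) Filter.atTop (fun n : ℕ => ((h n : ℝ)) ^ (1 / (n : ℝ))) :=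
    Filter.isBoundedUnder_of ⟨8, hu8⟩
  have hcob : Filter.IsCoboundedUnder (· ≤ ·) Filter.atTop (fun n : ℕ => ((h n : ℝ)) ^ (1 / (n : ℝ))) :=
    (Filter.isBoundedUnder_of ⟨0, hunn⟩ :
      Filter.IsBoundedUnder (· ≥ ·) Filter.atTop _).isCoboundedUnder_le
  -- UPPER LIMSUP
  have hvtend : Tendsto (fun n : ℕ => (((3923909:ℝ)/2000000):ℝ) ^ (1/(n:ℝ)) * ((3923909:ℝ)/1000000)) atTop (𝓝 (((3923909:ℝ)/1000000):ℝ)) := by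
    have hx := tendsto_one_div_atTop_nhds_zero_nat (𝕜 := ℝ)
    have h1 : Tendsto (fun n : ℕ => Real.log ((3923909:ℝ)/2000000) * (1/(n:ℝ))) atTop (𝓝 0) := by
      simpa using hx.const_mul (Real.log ((3923909:ℝ)/2000000))
    have h2 : Tendsto (fun n : ℕ => Real.exp (Real.log ((3923909:ℝ)/2000000) * (1/(n:ℝ)))) atTop (𝓝 1) := by
      have := (Real.continuous_exp.tendsto 0).comp h1
      simpa [Function.comp_def] using this
    have h3 : Tendsto (fun n : ℕ => (((3923909:ℝ)/2000000):ℝ) ^ (1/(n:ℝ))) atTop (𝓝 1) := by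
      refine h2.congr fun n => ?_
      rw [Real.rpow_def_of_pos (by norm_num)]
    simpa using h3.mul_const (((3923909:ℝ)/1000000):ℝ)
  have hupper : Filter.limsup (fun n : ℕ => ((h n : ℝ)) ^ (1 / (n : ℝ))) Filter.atTop ≤ ((3923909:ℝ)/1000000) := by
    have hev : ∀ᶠ n in atTop, ((h n : ℝ)) ^ (1 / (n : ℝ)) ≤ (((3923909:ℝ)/2000000):ℝ) ^ (1/(n:ℝ)) * ((3923909:ℝ)/1000000) :=
      eventually_atTop.2 ⟨1, huBL⟩
    calc Filter.limsup (fun n : ℕ => ((h n : ℝ)) ^ (1 / (n : ℝ))) Filter.atTop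
        ≤ Filter.limsup (fun n : ℕ => (((3923909:ℝ)/2000000):ℝ) ^ (1/(n:ℝ)) * ((3923909:ℝ)/1000000)) Filter.atTop :=
          Filter.limsup_le_limsup hev hcob hvtend.isBoundedUnder_le
      _ = ((3923909:ℝ)/1000000) := hvtend.limsup_eq
  -- LOWER BOUND machinery
  have hQ1bound : ∀ M, ∑ m ∈ range (M+1), (h m : ℝ) * (((1000000:ℝ)/3923450)^2)^m ≤ ((1074764:ℝ)/1000000) := by
    have hQ110 : ∑ m ∈ range 11, (h m : ℝ) * (((1000000:ℝ)/3923450)^2)^m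
        + ((3923909:ℝ)/2000000) * ((((1000000:ℝ)/3923450)^2 * (3923909/1000000))^11 * (1 - (((1000000:ℝ)/3923450)^2 * (3923909/1000000)))⁻¹) ≤ ((1074764:ℝ)/1000000) := by
      simp only [Finset.sum_range_succ, Finset.sum_range_zero, hh0, v1, v2, v3, v4, v5, v6, v7, v8, v9, v10]
      push_cast
      norm_num
    have htail_nn : (0:ℝ) ≤ ((3923909:ℝ)/2000000) * ((((1000000:ℝ)/3923450)^2 * (3923909/1000000))^11 * (1 - (((1000000:ℝ)/3923450)^2 * (3923909/1000000)))⁻¹) := by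
      have : ((((1000000:ℝ)/3923450)^2 * (3923909/1000000)):ℝ) < 1 := by norm_num
      have h2 : (0:ℝ) ≤ ((((1000000:ℝ)/3923450)^2 * (3923909/1000000)):ℝ) := by positivity
      have : (0:ℝ) ≤ (1 - ((((1000000:ℝ)/3923450)^2 * (3923909/1000000)):ℝ))⁻¹ := inv_nonneg.2 (by linarith)
      positivity
    intro M
    by_cases hM : M ≤ 10
    · have h1 : ∑ m ∈ range (M+1), (h m : ℝ) * (((1000000:ℝ)/3923450)^2)^m
          ≤ ∑ m ∈ range 11, (h m : ℝ) * (((1000000:ℝ)/3923450)^2)^m :=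
        Finset.sum_le_sum_of_subset_of_nonneg (Finset.range_subset_range.2 (by omega))
          (fun m _ _ => mul_nonneg (hcast m) (by positivity))
      linarith
    · push_neg at hM
      rw [← Finset.sum_range_add_sum_Ico _ (by omega : 11 ≤ M + 1)]
      have hIco : ∑ m ∈ Ico 11 (M+1), (h m : ℝ) * (((1000000:ℝ)/3923450)^2)^m
          ≤ ((3923909:ℝ)/2000000) * ((((1000000:ℝ)/3923450)^2 * (3923909/1000000))^11 * (1 - (((1000000:ℝ)/3923450)^2 * (3923909/1000000)))⁻¹) := by
        have hper : ∀ m ∈ Ico 11 (M+1), (h m : ℝ) * (((1000000:ℝ)/3923450)^2)^m ≤ ((3923909:ℝ)/2000000) * (((1000000:ℝ)/3923450)^2 * (3923909/1000000))^m := by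
          intro m _
          have hsplit : ((((1000000:ℝ)/3923450):ℝ)^2)^m = ((1000000:ℝ)/3923909)^m * (((1000000:ℝ)/3923450)^2 * (3923909/1000000))^m := by
            rw [← mul_pow]
            norm_num
          rw [hsplit, ← mul_assoc]
          exact mul_le_mul_of_nonneg_right (hterm m) (by positivity)
        refine le_trans (Finset.sum_le_sum hper) ?_
        rw [← Finset.mul_sum]
        refine mul_le_mul_of_nonneg_left ?_ (by norm_num)
        rw [Finset.sum_Ico_eq_sum_range]
        have heq : ∀ j, ((((1000000:ℝ)/3923450)^2 * (3923909/1000000)):ℝ)^(11 + j) = (((1000000:ℝ)/3923450)^2 * (3923909/1000000))^11 * (((1000000:ℝ)/3923450)^2 * (3923909/1000000))^j := fun j => pow_add _ 11 j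
        calc ∑ j ∈ range (M + 1 - 11), ((((1000000:ℝ)/3923450)^2 * (3923909/1000000)):ℝ)^(11 + j)
            = ∑ j ∈ range (M + 1 - 11), ((((1000000:ℝ)/3923450)^2 * (3923909/1000000)):ℝ)^11 * (((1000000:ℝ)/3923450)^2 * (3923909/1000000))^j :=
              Finset.sum_congr rfl (fun j _ => heq j)
          _ = ((((1000000:ℝ)/3923450)^2 * (3923909/1000000)):ℝ)^11 * ∑ j ∈ range (M + 1 - 11), ((((1000000:ℝ)/3923450)^2 * (3923909/1000000)):ℝ)^j := by
              rw [Finset.mul_sum]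
          _ ≤ ((((1000000:ℝ)/3923450)^2 * (3923909/1000000)):ℝ)^11 * (1 - (((1000000:ℝ)/3923450)^2 * (3923909/1000000)))⁻¹ := by
              refine mul_le_mul_of_nonneg_left ?_ (by positivity)
              exact hipGeomBound (((1000000:ℝ)/3923450)^2 * (3923909/1000000)) (by positivity) (by norm_num) _
      linarith
  have hpoly : ∀ s : ℝ, s + ((1:ℝ)/20000) ≤ 1 + ((1000000:ℝ)/3923450) + ((1000000:ℝ)/3923450)*s^2 - ((1000000:ℝ)/3923450)*((1074764:ℝ)/1000000) := by
    intro s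
    nlinarith [sq_nonneg (s - 3923450/2000000)]
  have hstep : ∀ M, (∑ k ∈ range (M+1), (h k : ℝ) * ((1000000:ℝ)/3923450)^k) + ((1:ℝ)/20000)
      ≤ ∑ k ∈ range (2*M+1+1), (h k : ℝ) * ((1000000:ℝ)/3923450)^k := by
    intro M
    have hk := key ((1000000:ℝ)/3923450) (2*M+1) (by omega)
    rw [show (2*M+1-1)/2 = M from by omega] at hk
    have hC : (∑ k ∈ range (M+1), (h k : ℝ) * ((1000000:ℝ)/3923450)^k)^2
        ≤ ∑ k ∈ range (2*M+1), ∑ i ∈ range (k+1),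
            ((h i : ℝ) * ((1000000:ℝ)/3923450)^i) * ((h (k-i) : ℝ) * ((1000000:ℝ)/3923450)^(k-i)) := by
      simpa using hipCauchyLB (fun k => (h k : ℝ) * ((1000000:ℝ)/3923450)^k) hann1 M (2*M+1) (by omega)
    have hQ := hQ1bound M
    have hx1pos : (0:ℝ) < ((1000000:ℝ)/3923450) := by norm_num
    have e1' : ((1000000:ℝ)/3923450) * (∑ k ∈ range (M+1), (h k : ℝ) * ((1000000:ℝ)/3923450)^k)^2
        ≤ ((1000000:ℝ)/3923450) * (∑ k ∈ range (2*M+1), ∑ i ∈ range (k+1),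
            ((h i : ℝ) * ((1000000:ℝ)/3923450)^i) * ((h (k-i) : ℝ) * ((1000000:ℝ)/3923450)^(k-i))) :=
      mul_le_mul_of_nonneg_left hC hx1pos.le
    have e2' : ((1000000:ℝ)/3923450) * (∑ m ∈ range (M+1), (h m : ℝ) * (((1000000:ℝ)/3923450)^2)^m) ≤ ((1000000:ℝ)/3923450) * ((1074764:ℝ)/1000000) :=
      mul_le_mul_of_nonneg_left hQ hx1pos.le
    set s1 : ℝ := ∑ k ∈ range (M+1), (h k : ℝ) * ((1000000:ℝ)/3923450)^k with hs1
    set s2 : ℝ := ∑ k ∈ range (2*M+1), ∑ i ∈ range (k+1),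
        ((h i : ℝ) * ((1000000:ℝ)/3923450)^i) * ((h (k-i) : ℝ) * ((1000000:ℝ)/3923450)^(k-i)) with hs2
    set s3 : ℝ := ∑ m ∈ range (M+1), (h m : ℝ) * (((1000000:ℝ)/3923450)^2)^m with hs3
    have hp := hpoly s1
    rw [hk]
    linarith [e1', e2', hp]
  have hgrow : ∀ k : ℕ, ∃ N, 1 + (k:ℝ) * ((1:ℝ)/20000) ≤ ∑ j ∈ range (N+1), (h j : ℝ) * ((1000000:ℝ)/3923450)^j := by
    intro k
    induction k with
    | zero =>
      refine ⟨0, ?_⟩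
      simp [Finset.sum_range_one, hh0]
    | succ k ihk =>
      obtain ⟨N, hN⟩ := ihk
      refine ⟨2*N+1, ?_⟩
      have := hstep N
      push_cast
      linarith
  -- LOWER LIMSUP
  have hlower : ((3923450:ℝ)/1000000) ≤ Filter.limsup (fun n : ℕ => ((h n : ℝ)) ^ (1 / (n : ℝ))) Filter.atTop := by
    by_contra hcon
    push_neg at hcon
    have hl0 : (0:ℝ) ≤ Filter.limsup (fun n : ℕ => ((h n : ℝ)) ^ (1 / (n : ℝ))) Filter.atTop :=
      Filter.le_limsup_of_frequently_le (Filter.Frequently.of_forall hunn) hbdd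
    set Λ := Filter.limsup (fun n : ℕ => ((h n : ℝ)) ^ (1 / (n : ℝ))) Filter.atTop with hLdef
    set a : ℝ := (Λ + 3923450/1000000)/2 with hadef
    have ha1 : Λ < a := by rw [hadef]; linarith
    have ha2 : a < 3923450/1000000 := by rw [hadef]; linarith
    have ha0 : 0 < a := by rw [hadef]; linarith
    have hev := Filter.eventually_lt_of_limsup_lt ha1 hbdd
    obtain ⟨N0, hN0⟩ := eventually_atTop.1 hev
    have hq0 : (0:ℝ) ≤ a * ((1000000:ℝ)/3923450) := by positivity
    have hq1 : a * ((1000000:ℝ)/3923450) < 1 := by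
      have h1 : a * ((1000000:ℝ)/3923450) < (3923450/1000000) * ((1000000:ℝ)/3923450) :=
        mul_lt_mul_of_pos_right ha2 (by norm_num)
      have h2 : ((3923450:ℝ)/1000000) * ((1000000:ℝ)/3923450) = 1 := by norm_num
      linarith
    have hhan : ∀ n, max N0 1 ≤ n → (h n : ℝ) * ((1000000:ℝ)/3923450)^n ≤ (a * ((1000000:ℝ)/3923450))^n := by
      intro n hn
      have h1n : 1 ≤ n := le_trans (le_max_right _ _) hn
      have hun := hN0 n (le_trans (le_max_left _ _) hn)
      have hhn : (h n : ℝ) ≤ a^n := by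
        have heq : (((h n : ℝ)) ^ (1/(n:ℝ)))^n = (h n : ℝ) := by
          rw [one_div]
          exact Real.rpow_inv_natCast_pow (hcast n) (by omega)
        calc (h n : ℝ) = (((h n : ℝ)) ^ (1/(n:ℝ)))^n := heq.symm
          _ ≤ a^n := pow_le_pow_left₀ (hunn n) hun.le n
      calc (h n : ℝ) * ((1000000:ℝ)/3923450)^n ≤ a^n * ((1000000:ℝ)/3923450)^n :=
            mul_le_mul_of_nonneg_right hhn (by positivity)
        _ = (a * ((1000000:ℝ)/3923450))^n := (mul_pow _ _ _).symm
    have hSB : ∀ N, ∑ k ∈ range (N+1), (h k : ℝ) * ((1000000:ℝ)/3923450)^k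
        ≤ (∑ k ∈ range (max N0 1), (h k : ℝ) * ((1000000:ℝ)/3923450)^k) + (1 - a * ((1000000:ℝ)/3923450))⁻¹ := by
      intro N
      have hgeo : (0:ℝ) ≤ (1 - a * ((1000000:ℝ)/3923450))⁻¹ := inv_nonneg.2 (by linarith)
      by_cases hc : N + 1 ≤ max N0 1
      · have h1 : ∑ k ∈ range (N+1), (h k : ℝ) * ((1000000:ℝ)/3923450)^k
            ≤ ∑ k ∈ range (max N0 1), (h k : ℝ) * ((1000000:ℝ)/3923450)^k :=
          Finset.sum_le_sum_of_subset_of_nonneg (Finset.range_subset_range.2 hc)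
            (fun k _ _ => hann1 k)
        linarith
      · push_neg at hc
        rw [← Finset.sum_range_add_sum_Ico _ (by omega : max N0 1 ≤ N + 1)]
        have h2 : ∑ k ∈ Ico (max N0 1) (N+1), (h k : ℝ) * ((1000000:ℝ)/3923450)^k
            ≤ ∑ k ∈ Ico (max N0 1) (N+1), (a * ((1000000:ℝ)/3923450))^k :=
          Finset.sum_le_sum (fun k hk => hhan k (Finset.mem_Ico.1 hk).1)
        have h3 : ∑ k ∈ Ico (max N0 1) (N+1), (a * ((1000000:ℝ)/3923450))^k
            ≤ ∑ k ∈ range (N+1), (a * ((1000000:ℝ)/3923450))^k := by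
          refine Finset.sum_le_sum_of_subset_of_nonneg ?_ (fun k _ _ => pow_nonneg hq0 k)
          intro k hk
          simp only [Finset.mem_Ico] at hk
          simp only [Finset.mem_range]
          omega
        have h4 := hipGeomBound (a * ((1000000:ℝ)/3923450)) hq0 hq1 (N+1)
        linarith
    obtain ⟨k, hk⟩ := exists_nat_gt
      ((((∑ k ∈ range (max N0 1), (h k : ℝ) * ((1000000:ℝ)/3923450)^k) + (1 - a * ((1000000:ℝ)/3923450))⁻¹) - 1) / ((1:ℝ)/20000))
    obtain ⟨N, hN⟩ := hgrow k
    have hSBN := hSB N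
    have hd : (0:ℝ) < ((1:ℝ)/20000) := by norm_num
    rw [div_lt_iff₀ hd] at hk
    linarith
  constructor
  · refine le_trans (le_of_eq ?_) hlower
    norm_num
  · refine le_trans hupper (le_of_eq ?_)
    norm_num
end

section
/- limsup_{n→∞} g_n^{1/n} = 4/(−2 − √2 + √(14 + 4√2)), i.e., the exponential growth rate of (g_n) equals the reciprocal of the smallest positive singularity of its generating function. -/
/-!
With `Sₙ(x) = ∑_{k<n} gₖ xᵏ`, the recurrence gives `S_{N+1} = 1 + x C_N - T_{N+1}`, where `Tₙ` are
the partial sums of `x³/(1 - 2x²)` and `C_N = ∑_{i+j<N} gᵢ gⱼ x^{i+j}` lies between `S_M²`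
(`2M ≤ N`) and `S_N²`; formally, `A = ∑ gₙ xⁿ` solves `A = 1 + x A² - x³/(1 - 2x²)`.

For `1/4 ≤ x < x₀` this quadratic has the real root `G(x)`, and by induction
`S_{N+1}(x) ≤ G(x) - (√2 x)^N / 2`: a deficit below `G(x)` is scaled by the slope `2x G(x) ≥ 5/6`,
which beats the ratio `√2 x` of the geometric tail of `x³/(1 - 2x²)`. Hence `gₙ xⁿ ≤ G(x)`.
For `x₀ < x < 1/2` the discriminant is negative, so `∑ gₙ xⁿ` diverges: its sum `s` would satisfy
`x s² - s + 1 - x³/(1 - 2x²) ≤ 0`. The Cauchy–Hadamard argument turns the two facts into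
`limsup gₙ^{1/n} = 1/x₀`.
-/

open Filter Real Finset Topology

section GrowthRate

variable {a : ℕ → ℝ} {x C : ℝ}

lemma rpow_one_div_le_of_mul_pow_le {n : ℕ} (ha : 0 ≤ a n) (hx : 0 < x) (h : a n * x ^ n ≤ C)
    (hn : n ≠ 0) : a n ^ (1 / (n : ℝ)) ≤ C ^ (1 / (n : ℝ)) * x⁻¹ := by
  have hle : a n ≤ C * x⁻¹ ^ n := by
    rwa [inv_pow, ← div_eq_mul_inv, le_div_iff₀ (by positivity)]
  have hC : 0 ≤ C := (mul_nonneg ha (by positivity)).trans h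
  calc a n ^ (1 / (n : ℝ)) ≤ (C * x⁻¹ ^ n) ^ (1 / (n : ℝ)) := by gcongr
    _ = C ^ (1 / (n : ℝ)) * x⁻¹ := by
      rw [mul_rpow hC (by positivity), one_div, pow_rpow_inv_natCast (by positivity) hn]

lemma tendsto_rpow_one_div_natCast (hC : 0 < C) :
    Tendsto (fun n : ℕ => C ^ (1 / (n : ℝ))) atTop (𝓝 1) := by
  have h := ((continuousAt_const_rpow hC.ne').tendsto).comp tendsto_one_div_atTop_nhds_zero_nat
  rwa [rpow_zero] at h

lemma exists_tendsto_of_mul_pow_le (ha : ∀ n, 0 ≤ a n) (hx : 0 < x) (hC : ∀ n, a n * x ^ n ≤ C) :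
    ∃ v : ℕ → ℝ, Tendsto v atTop (𝓝 x⁻¹) ∧ (fun n => a n ^ (1 / (n : ℝ))) ≤ᶠ[atTop] v := by
  have hC' : ∀ n, a n * x ^ n ≤ max C 1 := fun n => (hC n).trans (le_max_left _ _)
  refine ⟨fun n => max C 1 ^ (1 / (n : ℝ)) * x⁻¹, ?_, ?_⟩
  · simpa using (tendsto_rpow_one_div_natCast (by positivity)).mul_const x⁻¹
  · filter_upwards [eventually_ne_atTop 0] with n hn
    exact rpow_one_div_le_of_mul_pow_le (ha n) hx (hC' n) hn

lemma isBoundedUnder_rpow_of_mul_pow_le (ha : ∀ n, 0 ≤ a n) (hx : 0 < x)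
    (hC : ∀ n, a n * x ^ n ≤ C) :
    IsBoundedUnder (· ≤ ·) atTop (fun n => a n ^ (1 / (n : ℝ))) := by
  obtain ⟨v, hv, hle⟩ := exists_tendsto_of_mul_pow_le ha hx hC
  exact hv.isBoundedUnder_le.mono_le hle

lemma limsup_rpow_le_of_mul_pow_le (ha : ∀ n, 0 ≤ a n) (hx : 0 < x) (hC : ∀ n, a n * x ^ n ≤ C) :
    limsup (fun n => a n ^ (1 / (n : ℝ))) atTop ≤ x⁻¹ := by
  obtain ⟨v, hv, hle⟩ := exists_tendsto_of_mul_pow_le ha hx hC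
  rw [← hv.limsup_eq]
  exact limsup_le_limsup hle (isCoboundedUnder_le_of_le atTop fun n => rpow_nonneg (ha n) _)
    hv.isBoundedUnder_le

lemma le_limsup_rpow_of_not_summable (ha : ∀ n, 0 ≤ a n)
    (hbdd : IsBoundedUnder (· ≤ ·) atTop (fun n => a n ^ (1 / (n : ℝ)))) (hx : 0 < x)
    (hs : ¬ Summable fun n => a n * x ^ n) :
    x⁻¹ ≤ limsup (fun n => a n ^ (1 / (n : ℝ))) atTop := by
  by_contra! hlt
  obtain ⟨ρ, hLρ, hρx⟩ := exists_between hlt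
  have hev := (eventually_lt_of_limsup_lt hLρ hbdd).and (eventually_ne_atTop 0)
  have hρ : 0 ≤ ρ := by
    obtain ⟨n, hn, -⟩ := hev.exists
    exact (rpow_nonneg (ha n) _).trans hn.le
  have hρx' : ρ * x < 1 := by
    simpa [hx.ne'] using mul_lt_mul_of_pos_right hρx hx
  refine hs ((summable_geometric_of_lt_one (by positivity) hρx').of_norm_bounded_eventually_nat ?_)
  filter_upwards [hev] with n ⟨hlt, hn⟩
  have han : a n ≤ ρ ^ n := by
    rw [← rpow_inv_natCast_pow (ha n) hn, ← one_div]
    gcongr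
    exact rpow_nonneg (ha n) _
  rw [Real.norm_of_nonneg (mul_nonneg (ha n) (by positivity)), mul_pow]
  gcongr

theorem limsup_rpow_eq_inv_of_bounded_of_not_summable {s r t : ℝ} (ha : ∀ n, 0 ≤ a n)
    (hs : 0 < s) (hsr : s < r) (hrt : r < t)
    (hbound : ∀ x ∈ Set.Ico s r, ∃ C, ∀ n, a n * x ^ n ≤ C)
    (hdiv : ∀ x ∈ Set.Ioo r t, ¬ Summable fun n => a n * x ^ n) :
    limsup (fun n => a n ^ (1 / (n : ℝ))) atTop = r⁻¹ := by
  have hr : 0 < r := hs.trans hsr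
  have hinv : Tendsto (fun x : ℝ => x⁻¹) (𝓝 r) (𝓝 r⁻¹) := (continuousAt_inv₀ hr.ne').tendsto
  obtain ⟨C, hC⟩ := hbound s ⟨le_rfl, hsr⟩
  have hbdd := isBoundedUnder_rpow_of_mul_pow_le ha hs hC
  apply le_antisymm
  · refine ge_of_tendsto (hinv.mono_left (nhdsWithin_le_nhds (s := Set.Iio r))) ?_
    filter_upwards [Ico_mem_nhdsLT hsr] with x hx
    obtain ⟨C, hC⟩ := hbound x hx
    exact limsup_rpow_le_of_mul_pow_le ha (hs.trans_le hx.1) hC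
  · refine le_of_tendsto (hinv.mono_left (nhdsWithin_le_nhds (s := Set.Ioi r))) ?_
    filter_upwards [Ioo_mem_nhdsGT hrt] with x hx
    exact le_limsup_rpow_of_not_summable ha hbdd (hr.trans hx.1) (hdiv x hx)

end GrowthRate

section TriangleSums

lemma sum_range_succ_sum_range_sub {M : Type*} [AddCommMonoid M] (f : ℕ → ℕ → M) (N : ℕ) :
    ∑ i ∈ range (N + 1), ∑ j ∈ range (N + 1 - i), f i j
      = ∑ i ∈ range N, ∑ j ∈ range (N - i), f i j + ∑ i ∈ range (N + 1), f i (N - i) := by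
  have hinner : ∀ i ∈ range N, ∑ j ∈ range (N + 1 - i), f i j
      = ∑ j ∈ range (N - i), f i j + f i (N - i) := fun i hi => by
    rw [show N + 1 - i = N - i + 1 by have := mem_range.mp hi; omega, sum_range_succ]
  rw [sum_range_succ, sum_congr rfl hinner, sum_add_distrib, sum_range_succ _ N]
  simp [add_assoc]

variable {b : ℕ → ℝ}

lemma sum_range_sum_range_sub_le_sq (hb : ∀ n, 0 ≤ b n) (N : ℕ) :
    ∑ i ∈ range N, ∑ j ∈ range (N - i), b i * b j ≤ (∑ n ∈ range N, b n) ^ 2 := by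
  rw [sq, sum_mul_sum]
  refine sum_le_sum fun i _ => sum_le_sum_of_subset_of_nonneg
    (range_subset_range.mpr (Nat.sub_le N i)) fun _ _ _ => mul_nonneg (hb _) (hb _)

lemma sq_le_sum_range_sum_range_sub (hb : ∀ n, 0 ≤ b n) (M : ℕ) :
    (∑ n ∈ range M, b n) ^ 2 ≤ ∑ i ∈ range (2 * M), ∑ j ∈ range (2 * M - i), b i * b j := by
  rw [sq, sum_mul_sum]
  calc ∑ i ∈ range M, ∑ j ∈ range M, b i * b j
      ≤ ∑ i ∈ range M, ∑ j ∈ range (2 * M - i), b i * b j := by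
        refine sum_le_sum fun i hi => sum_le_sum_of_subset_of_nonneg
          (range_subset_range.mpr (by have := mem_range.mp hi; omega))
          fun _ _ _ => mul_nonneg (hb _) (hb _)
    _ ≤ _ := sum_le_sum_of_subset_of_nonneg (range_subset_range.mpr (by omega))
        fun _ _ _ => sum_nonneg fun _ _ => mul_nonneg (hb _) (hb _)

end TriangleSums

lemma sum_range_succ_eq_of_convolution {R : Type*} [CommRing R] {b t : ℕ → R} {x : R}
    (hb0 : b 0 = 1) (ht0 : t 0 = 0)
    (hb : ∀ n, b (n + 1) = x * ∑ i ∈ range (n + 1), b i * b (n - i) - t (n + 1)) (N : ℕ) :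
    ∑ n ∈ range (N + 1), b n
      = 1 + x * ∑ i ∈ range N, ∑ j ∈ range (N - i), b i * b j - ∑ n ∈ range (N + 1), t n := by
  induction N with
  | zero => simp [hb0, ht0]
  | succ N ih =>
    rw [sum_range_succ b, ih, hb, sum_range_succ_sum_range_sub, sum_range_succ t (N + 1)]
    ring

noncomputable def x₀ : ℝ := (-2 - √2 + √(14 + 4 * √2)) / 4

lemma sqrt_two_bounds : 1.4 < √2 ∧ √2 < 1.5 := by
  constructor
  · rw [lt_sqrt (by norm_num)]; norm_num
  · rw [sqrt_lt' (by norm_num)]; norm_num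

lemma x₀_pos : 0 < x₀ := by
  have h : 2 + √2 < √(14 + 4 * √2) := by
    rw [lt_sqrt (by positivity)]
    nlinarith [sq_sqrt (show (0:ℝ) ≤ 2 by norm_num)]
  unfold x₀; linarith

lemma x₀_isRoot : 2 * x₀ ^ 2 + (2 + √2) * x₀ - 1 = 0 := by
  have h := sq_sqrt (show (0:ℝ) ≤ 14 + 4 * √2 by positivity)
  unfold x₀
  linear_combination h / 8 - sq_sqrt (show (0:ℝ) ≤ 2 by norm_num) / 8

lemma quadratic_eq_mul_sub_x₀ (x : ℝ) :
    2 * x ^ 2 + (2 + √2) * x - 1 = (x - x₀) * (2 * (x + x₀) + 2 + √2) := by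
  linear_combination x₀_isRoot

lemma x₀_mem_Ioo : x₀ ∈ Set.Ioo (1 / 4) 0.26 := by
  obtain ⟨h₁, h₂⟩ := sqrt_two_bounds
  have h₀ := x₀_pos
  constructor
  · nlinarith [quadratic_eq_mul_sub_x₀ (1 / 4)]
  · nlinarith [quadratic_eq_mul_sub_x₀ 0.26]

/-- The coefficients of `x³/(1 - 2x²)`; `corrCoeff n` replaces `ℓ_{(n-1)/2} - [n = 1]` in the
recurrence of `g`. -/
def corrCoeff (n : ℕ) : ℝ := if Odd n ∧ 3 ≤ n then 2 ^ ((n - 3) / 2) else 0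

lemma corrCoeff_two_mul_add_three (k : ℕ) : corrCoeff (2 * k + 3) = 2 ^ k := by
  rw [corrCoeff, if_pos ⟨⟨k + 1, by ring⟩, by omega⟩]
  congr 1; omega

lemma corrCoeff_eq_zero_or (n : ℕ) : corrCoeff n = 0 ∨ ∃ k, n = 2 * k + 3 := by
  unfold corrCoeff
  split_ifs with h
  · obtain ⟨⟨m, rfl⟩, h3⟩ := h
    exact Or.inr ⟨m - 1, by omega⟩
  · exact Or.inl rfl

lemma corrCoeff_nonneg (n : ℕ) : 0 ≤ corrCoeff n := by
  unfold corrCoeff; split_ifs <;> positivity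

noncomputable def corrGen (x : ℝ) : ℝ := x ^ 3 / (1 - 2 * x ^ 2)

lemma hasSum_corrCoeff_mul_pow {x : ℝ} (hx : 2 * x ^ 2 < 1) :
    HasSum (fun n => corrCoeff n * x ^ n) (corrGen x) := by
  have hinj : Function.Injective fun k : ℕ => 2 * k + 3 := fun i j h => by simp at h; omega
  have hcomp : (fun n => corrCoeff n * x ^ n) ∘ (fun k : ℕ => 2 * k + 3)
      = fun k => x ^ 3 * (2 * x ^ 2) ^ k := by
    funext k
    rw [Function.comp_apply, corrCoeff_two_mul_add_three]
    ring
  rw [← hinj.hasSum_iff, hcomp, corrGen, div_eq_mul_inv]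
  · exact (hasSum_geometric_of_lt_one (by positivity) hx).mul_left _
  · intro n hn
    rcases corrCoeff_eq_zero_or n with h | ⟨k, rfl⟩
    · simp [h]
    · exact absurd ⟨k, rfl⟩ hn

lemma corrCoeff_mul_pow_le {x : ℝ} (hx : 0 ≤ x) (n : ℕ) :
    corrCoeff n * x ^ n ≤ (√2 * x) ^ n / 2 := by
  rcases corrCoeff_eq_zero_or n with h | ⟨k, rfl⟩
  · rw [h, zero_mul]; positivity
  · have h2 : √2 ^ (2 * k + 3) = 2 ^ (k + 1) * √2 := by
      rw [pow_add, pow_mul, sq_sqrt zero_le_two, pow_succ, pow_two, pow_succ,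
        mul_self_sqrt zero_le_two]
      ring
    rw [corrCoeff_two_mul_add_three, mul_pow, h2]
    have h1 : 1 ≤ √2 := by rw [one_le_sqrt]; norm_num
    have h0 : 0 ≤ 2 ^ k * x ^ (2 * k + 3) := by positivity
    rw [pow_succ 2 k]
    nlinarith [mul_le_mul_of_nonneg_left h1 h0]

lemma corrGen_sub_sum_le {x : ℝ} (hx : 0 ≤ x) (hη : √2 * x ≤ 1 / 2) (N : ℕ) :
    corrGen x - ∑ n ∈ range N, corrCoeff n * x ^ n ≤ (√2 * x) ^ N := by
  have hx2 : 2 * x ^ 2 < 1 := by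
    have : (√2 * x) ^ 2 = 2 * x ^ 2 := by rw [mul_pow, sq_sqrt zero_le_two]
    nlinarith [mul_nonneg (sqrt_nonneg 2) hx]
  have htail := (hasSum_nat_add_iff' N).mpr (hasSum_corrCoeff_mul_pow hx2)
  have hgeom := (hasSum_geometric_of_lt_one (by positivity) (hη.trans_lt one_half_lt_one)).mul_left
    ((√2 * x) ^ N / 2)
  refine (hasSum_le (fun k => ?_) htail hgeom).trans ?_
  · exact (corrCoeff_mul_pow_le hx (k + N)).trans_eq (by ring)
  · rw [← div_eq_mul_inv, div_le_iff₀ (by linarith)]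
    nlinarith [pow_nonneg (mul_nonneg (sqrt_nonneg 2) hx) N]

/-- The paper's `G`, since `discrim x (-1) (1 - corrGen x) = 1 - 4x(1 - x³/(1 - 2x²))`. -/
noncomputable def genFun (x : ℝ) : ℝ := (1 - √(discrim x (-1) (1 - corrGen x))) / (2 * x)

section Discriminant

variable {x : ℝ}

lemma one_sub_two_mul_sq_mul_discrim (hx : 2 * x ^ 2 ≠ 1) :
    (1 - 2 * x ^ 2) * discrim x (-1) (1 - corrGen x)
      = (2 * x ^ 2 + (2 + √2) * x - 1) * (2 * x ^ 2 + (2 - √2) * x - 1) := by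
  have h : 1 - 2 * x ^ 2 ≠ 0 := sub_ne_zero.mpr (Ne.symm hx)
  rw [discrim, corrGen]
  field_simp
  linear_combination x ^ 2 * sq_sqrt (show (0:ℝ) ≤ 2 by norm_num)

lemma discrim_corrGen_nonneg (hx : 0 < x) (hx₀ : x ≤ x₀) :
    0 ≤ discrim x (-1) (1 - corrGen x) := by
  obtain ⟨-, h26⟩ := x₀_mem_Ioo
  obtain ⟨h₁, h₂⟩ := sqrt_two_bounds
  have hden : 0 < 1 - 2 * x ^ 2 := by nlinarith
  have hp : 2 * x ^ 2 + (2 + √2) * x - 1 ≤ 0 := by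
    rw [quadratic_eq_mul_sub_x₀]
    exact mul_nonpos_of_nonpos_of_nonneg (by linarith) (by linarith [x₀_pos])
  have hq : 2 * x ^ 2 + (2 - √2) * x - 1 ≤ 0 := by nlinarith
  have := one_sub_two_mul_sq_mul_discrim (x := x) (by linarith)
  nlinarith [mul_nonneg_of_nonpos_of_nonpos hp hq]

lemma discrim_corrGen_neg (hx₀ : x₀ < x) (hx : x < 1 / 2) :
    discrim x (-1) (1 - corrGen x) < 0 := by
  obtain ⟨h₁, h₂⟩ := sqrt_two_bounds
  have h0 := x₀_pos
  have hden : 0 < 1 - 2 * x ^ 2 := by nlinarith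
  have hp : 0 < 2 * x ^ 2 + (2 + √2) * x - 1 := by
    rw [quadratic_eq_mul_sub_x₀]; exact mul_pos (by linarith) (by linarith)
  have hq : 2 * x ^ 2 + (2 - √2) * x - 1 < 0 := by nlinarith
  have := one_sub_two_mul_sq_mul_discrim (x := x) (by linarith)
  nlinarith [mul_neg_of_pos_of_neg hp hq]

lemma discrim_corrGen_le (hx : 1 / 4 ≤ x) (hx' : x ≤ 0.26) :
    discrim x (-1) (1 - corrGen x) ≤ 1 / 36 := by
  have hT : corrGen x ≤ 1 / 40 := by
    rw [corrGen, div_le_iff₀ (by nlinarith)]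
    nlinarith
  rw [discrim]
  nlinarith

lemma genFun_isRoot (hx : 0 < x) (hx₀ : x ≤ x₀) :
    x * (genFun x * genFun x) + -1 * genFun x + (1 - corrGen x) = 0 := by
  rw [quadratic_eq_zero_iff hx.ne' (mul_self_sqrt (discrim_corrGen_nonneg hx hx₀)).symm]
  right
  rw [genFun, neg_neg]

lemma five_sixths_le_two_mul_genFun (hx : 1 / 4 ≤ x) (hx₀ : x ≤ x₀) :
    5 / 6 ≤ 2 * x * genFun x := by
  have hsqrt : √(discrim x (-1) (1 - corrGen x)) ≤ 1 / 6 := by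
    rw [sqrt_le_left (by norm_num)]
    exact (discrim_corrGen_le hx (hx₀.trans x₀_mem_Ioo.2.le)).trans_eq (by norm_num)
  rw [genFun, mul_div_cancel₀ _ (by positivity)]
  linarith

end Discriminant

structure IsHipsterSeq (a : ℕ → ℝ) : Prop where
  zero : a 0 = 1
  succ : ∀ n, a (n + 1) = ∑ i ∈ range (n + 1), a i * a (n - i) - corrCoeff (n + 1)

namespace IsHipsterSeq

variable {a : ℕ → ℝ} (ha : IsHipsterSeq a)
include ha

lemma two_pow_div_two_le (n : ℕ) : (2 : ℝ) ^ (n / 2) ≤ a n := by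
  induction n using Nat.strong_induction_on with
  | _ n ih =>
    match n with
    | 0 => simp [ha.zero]
    | 1 => simp [ha.succ 0, ha.zero, corrCoeff]
    | n + 2 =>
      have hnonneg : ∀ i ≤ n + 1, 0 ≤ a i := fun i hi =>
        (pow_nonneg zero_le_two _).trans (ih i (by omega))
      have hsum : a (n + 1) + a (n + 1) ≤ ∑ i ∈ range (n + 2), a i * a (n + 1 - i) := by
        simpa [ha.zero] using add_le_sum (f := fun i => a i * a (n + 1 - i))
          (fun i hi => mul_nonneg (hnonneg i (by simp at hi; omega)) (hnonneg _ (by omega)))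
          (mem_range.mpr (by omega : 0 < n + 2)) (mem_range.mpr (by omega : n + 1 < n + 2))
          (by omega : 0 ≠ n + 1)
      have hprev := ih (n + 1) (by omega)
      rw [ha.succ (n + 1)]
      obtain ⟨k, rfl | rfl⟩ := Nat.even_or_odd' n
      · have hc : corrCoeff (2 * k + 1 + 1) = 0 :=
          (corrCoeff_eq_zero_or _).resolve_right fun ⟨j, hj⟩ => by omega
        rw [show (2 * k + 1) / 2 = k by omega] at hprev
        rw [hc, show (2 * k + 2) / 2 = k + 1 by omega, pow_succ]
        linarith
      · rw [show 2 * k + 1 + 1 + 1 = 2 * k + 3 by ring, corrCoeff_two_mul_add_three]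
        rw [show (2 * k + 1 + 1) / 2 = k + 1 by omega, pow_succ] at hprev
        rw [show (2 * k + 1 + 2) / 2 = k + 1 by omega, pow_succ]
        linarith [pow_pos (two_pos : (0:ℝ) < 2) k]

lemma nonneg (n : ℕ) : 0 ≤ a n :=
  (pow_nonneg zero_le_two _).trans (ha.two_pow_div_two_le n)

lemma sum_range_succ_mul_pow (x : ℝ) (N : ℕ) :
    ∑ n ∈ range (N + 1), a n * x ^ n
      = 1 + x * ∑ i ∈ range N, ∑ j ∈ range (N - i), a i * x ^ i * (a j * x ^ j)
        - ∑ n ∈ range (N + 1), corrCoeff n * x ^ n := by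
  refine sum_range_succ_eq_of_convolution (b := fun n => a n * x ^ n)
    (t := fun n => corrCoeff n * x ^ n) (by simp [ha.zero]) (by simp [corrCoeff]) (fun n => ?_) N
  rw [ha.succ, sub_mul, mul_sum, sum_mul]
  congr 1
  refine sum_congr rfl fun i hi => ?_
  have : x ^ (n + 1) = x * (x ^ i * x ^ (n - i)) := by
    rw [← pow_add, ← pow_succ', Nat.add_sub_cancel' (by simpa [Nat.lt_succ_iff] using hi)]
  rw [this]
  ring

lemma sum_range_succ_mul_pow_le {x : ℝ} (hx : 1 / 4 ≤ x) (hx₀ : x < x₀) (N : ℕ) :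
    ∑ n ∈ range (N + 1), a n * x ^ n ≤ genFun x - (√2 * x) ^ N / 2 := by
  have hx26 : x ≤ 0.26 := hx₀.le.trans x₀_mem_Ioo.2.le
  have hx0 : 0 < x := by linarith
  set η := √2 * x with hη
  have hη2 : η ^ 2 = 2 * x ^ 2 := by rw [hη, mul_pow, sq_sqrt zero_le_two]
  have hη0 : 0 ≤ η := by positivity
  have hη37 : η ≤ 0.37 := by nlinarith
  have hM := five_sixths_le_two_mul_genFun hx hx₀.le
  have hroot := genFun_isRoot hx0 hx₀.le
  have hb : ∀ n, 0 ≤ a n * x ^ n := fun n => mul_nonneg (ha.nonneg n) (by positivity)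
  induction N with
  | zero =>
    have : 3 / 2 ≤ genFun x := by nlinarith
    simp [ha.zero]
    linarith
  | succ N ih =>
    set ε := η ^ N / 2 with hε_def
    have hε0 : 0 ≤ ε := by positivity
    have hε : ε ≤ 1 / 2 := by
      have : η ^ N ≤ 1 := pow_le_one₀ hη0 (by linarith)
      linarith
    have hS0 : 0 ≤ ∑ n ∈ range (N + 1), a n * x ^ n := sum_nonneg fun n _ => hb n
    have hconv := sum_range_sum_range_sub_le_sq hb (N + 1)
    have hsq : (∑ n ∈ range (N + 1), a n * x ^ n) ^ 2 ≤ (genFun x - ε) ^ 2 := by gcongr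
    have htail := corrGen_sub_sum_le hx0.le (by linarith) (N + 2)
    rw [ha.sum_range_succ_mul_pow]
    have hstep : η ^ (N + 1) / 2 = η * ε := by ring
    have htail' : η ^ (N + 2) = 2 * η ^ 2 * ε := by ring
    rw [hstep]
    rw [htail'] at htail
    have hkey : 0 ≤ ε * (2 * x * genFun x - x * ε - 2 * η ^ 2 - η) :=
      mul_nonneg hε0 (by nlinarith [mul_le_mul hx26 hε hε0 (by norm_num)])
    linarith [mul_le_mul_of_nonneg_left (hconv.trans hsq) hx0.le]

lemma mul_pow_le_genFun {x : ℝ} (hx : 1 / 4 ≤ x) (hx₀ : x < x₀) (n : ℕ) :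
    a n * x ^ n ≤ genFun x := by
  have hx0 : 0 < x := by linarith
  calc a n * x ^ n ≤ ∑ m ∈ range (n + 1), a m * x ^ m :=
        single_le_sum (fun m _ => mul_nonneg (ha.nonneg m) (by positivity)) (self_mem_range_succ n)
    _ ≤ genFun x - (√2 * x) ^ n / 2 := ha.sum_range_succ_mul_pow_le hx hx₀ n
    _ ≤ genFun x := by linarith [pow_nonneg (mul_nonneg (sqrt_nonneg 2) hx0.le) n]

lemma not_summable_mul_pow {x : ℝ} (hx₀ : x₀ < x) (hx : x < 1 / 2) :
    ¬ Summable fun n => a n * x ^ n := by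
  rintro ⟨s, hs⟩
  have hx0 : 0 < x := x₀_pos.trans hx₀
  have hb : ∀ n, 0 ≤ a n * x ^ n := fun n => mul_nonneg (ha.nonneg n) (by positivity)
  have hT := hasSum_corrCoeff_mul_pow (x := x) (by nlinarith)
  have hbound : ∀ M, 1 + x * (∑ n ∈ range M, a n * x ^ n) ^ 2 - corrGen x ≤ s := fun M => by
    have hS := sum_le_hasSum (range (2 * M + 1)) (fun n _ => hb n) hs
    have hTle := sum_le_hasSum (range (2 * M + 1))
      (fun n _ => mul_nonneg (corrCoeff_nonneg n) (by positivity)) hT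
    rw [ha.sum_range_succ_mul_pow] at hS
    nlinarith [mul_le_mul_of_nonneg_left (sq_le_sum_range_sum_range_sub hb M) hx0.le]
  have hlim : 1 + x * s ^ 2 - corrGen x ≤ s :=
    le_of_tendsto' (((hs.tendsto_sum_nat.pow 2).const_mul x).const_add 1 |>.sub_const _) hbound
  have hdisc : discrim x (-1) (1 - corrGen x) = (2 * x * s - 1) ^ 2
      - 4 * x * (x * (s * s) + -1 * s + (1 - corrGen x)) := by
    rw [discrim]; ring
  nlinarith [discrim_corrGen_neg hx₀ hx, sq_nonneg (2 * x * s - 1)]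

end IsHipsterSeq

lemma isHipsterSeq_of_recurrence {g ℓ : ℕ → ℤ} (hℓ0 : ℓ 0 = 1)
    (hℓ : ∀ k, 1 ≤ k → ℓ k = 2 ^ (k - 1)) (hg0 : g 0 = 1)
    (hg : ∀ n, 1 ≤ n → g n = (∑ i ∈ range n, g i * g (n - 1 - i))
      - (if Odd n then ℓ ((n - 1) / 2) else 0) + (if n = 1 then 1 else 0)) :
    IsHipsterSeq fun n => (g n : ℝ) where
  zero := by simp [hg0]
  succ n := by
    have hcorr : (((if Odd (n + 1) then ℓ (n / 2) else 0) - (if n + 1 = 1 then 1 else 0) : ℤ) : ℝ)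
        = corrCoeff (n + 1) := by
      rcases Nat.eq_zero_or_pos n with rfl | hn
      · simp [hℓ0, corrCoeff]
      rw [if_neg (by omega : n + 1 ≠ 1), sub_zero, corrCoeff]
      by_cases hodd : Odd (n + 1)
      · have h2 : 2 ≤ n := by obtain ⟨k, hk⟩ := hodd; omega
        rw [if_pos hodd, if_pos ⟨hodd, by omega⟩, hℓ _ (by omega)]
        push_cast
        congr 1
        omega
      · simp [hodd]
    rw [hg (n + 1) (by omega), ← hcorr]
    push_cast
    ring

/-- `limsup g n ^ (1/n) = 4/(−2 − √2 + √(14 + 4√2))`: the exponential growth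
rate of the upper-approximation sequence `g` equals the reciprocal of the
smallest positive singularity of its generating function. -/
theorem binary_hipster_upper_growth_rate
    (g : ℕ → ℤ)
    (ℓ : ℕ → ℤ)
    (hℓ0 : ℓ 0 = 1)
    (hℓ : ∀ k, 1 ≤ k → ℓ k = 2 ^ (k - 1))
    (hg0 : g 0 = 1)
    (hg : ∀ n, 1 ≤ n →
      g n = (∑ i ∈ Finset.range n, g i * g (n - 1 - i))
              - (if Odd n then ℓ ((n - 1) / 2) else 0)
              + (if n = 1 then 1 else 0)) :
    Filter.limsup (fun n : ℕ => ((g n : ℝ)) ^ (1 / (n : ℝ))) Filter.atTop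
      = 4 / (-2 - Real.sqrt 2 + Real.sqrt (14 + 4 * Real.sqrt 2)) := by
  have ha := isHipsterSeq_of_recurrence hℓ0 hℓ hg0 hg
  obtain ⟨h14, h26⟩ := x₀_mem_Ioo
  rw [limsup_rpow_eq_inv_of_bounded_of_not_summable ha.nonneg (by norm_num : (0:ℝ) < 1 / 4) h14
    (h26.trans (by norm_num : (0.26 : ℝ) < 1 / 2))
    (fun x hx => ⟨genFun x, ha.mul_pow_le_genFun hx.1 hx.2⟩)
    (fun x hx => ha.not_summable_mul_pow hx.1 hx.2), x₀, inv_div]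
end

section
/- For all n ≥ 0, 0 < f_n and f_n ≤ h_n, where (f_n) is the sequence obtained from the plane 1-2 hipster recurrence by replacing the subtracted h-term with the corresponding Motzkin number. -/
/-- For all `n ≥ 0`, `0 < f n` and `f n ≤ h n`, where `f` is obtained from the
plane 1-2 hipster recurrence by replacing the subtracted `h`-term with the
corresponding Motzkin number. -/
theorem plane12_hipster_lower_approx
    (m h f : ℕ → ℤ)
    (hm0 : m 0 = 1)
    (hm : ∀ n, 1 ≤ n →
      m n = m (n - 1) + ∑ i ∈ Finset.range (n - 1), m i * m (n - 2 - i))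
    (hh0 : h 0 = 1)
    (hh : ∀ n, 1 ≤ n →
      h n = (∑ i ∈ Finset.Ico 1 n, h i * h (n - 1 - i))
              - (if Odd n then h ((n - 1) / 2) else 0)
              + 2 * (if n = 1 then 1 else 0))
    (hf0 : f 0 = 1)
    (hf : ∀ n, 1 ≤ n →
      f n = (∑ i ∈ Finset.Ico 1 n, f i * f (n - 1 - i))
              - (if Odd n then m ((n - 1) / 2) else 0)
              + 2 * (if n = 1 then 1 else 0)) :
    ∀ n, 0 < f n ∧ f n ≤ h n := by
  have mpos : ∀ n, 0 < m n := by
    intro n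
    induction n using Nat.strong_induction_on with
    | _ n ih =>
      rcases Nat.eq_zero_or_pos n with h0 | h1
      · simp [h0, hm0]
      · rw [hm n h1]
        have hs : 0 ≤ ∑ i ∈ Finset.range (n - 1), m i * m (n - 2 - i) :=
          Finset.sum_nonneg fun i hi =>
            mul_nonneg (ih i (by simp at hi; omega)).le (ih (n - 2 - i) (by omega)).le
        have := ih (n - 1) (by omega)
        linarith
  have mmono : Monotone m := by
    apply monotone_nat_of_le_succ
    intro n
    rw [hm (n + 1) (by omega)]
    simp only [Nat.add_sub_cancel]
    have hs : 0 ≤ ∑ i ∈ Finset.range n, m i * m (n + 1 - 2 - i) :=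
      Finset.sum_nonneg fun i hi => mul_nonneg (mpos i).le (mpos _).le
    linarith
  -- key sum inequality for Motzkin
  have msum : ∀ k, 1 ≤ k →
      m k ≤ m (k - 1) + ∑ j ∈ Finset.Ico 1 k, m j * m (k - 1 - j) := by
    intro k hk
    rw [hm k hk]
    have hre : ∑ j ∈ Finset.Ico 1 k, m j * m (k - 1 - j)
        = ∑ i ∈ Finset.range (k - 1), m (1 + i) * m (k - 1 - (1 + i)) := by
      rw [Finset.sum_Ico_eq_sum_range]
    rw [hre]
    have : ∑ i ∈ Finset.range (k - 1), m i * m (k - 2 - i)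
        ≤ ∑ i ∈ Finset.range (k - 1), m (1 + i) * m (k - 1 - (1 + i)) := by
      apply Finset.sum_le_sum
      intro i hi
      have h1 : k - 1 - (1 + i) = k - 2 - i := by omega
      rw [h1]
      exact mul_le_mul_of_nonneg_right (mmono (by omega)) (mpos _).le
    linarith
  have hf1 : f 1 = 1 := by
    rw [hf 1 le_rfl]
    simp [hm0]
  have key : ∀ n, m (n / 2) ≤ f n ∧ f n ≤ h n ∧ h n ≤ m (n - 1) := by
    intro n
    induction n using Nat.strong_induction_on with
    | _ n ih =>
      rcases Nat.lt_or_ge n 2 with hn2 | hn2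
      · interval_cases n
        · simp [hf0, hh0, hm0]
        · have hh1 : h 1 = 1 := by
            rw [hh 1 le_rfl]
            simp [hh0]
          simp [hf1, hh1, hm0]
      -- n ≥ 2
      obtain ⟨p, rfl⟩ : ∃ p, n = p + 2 := ⟨n - 2, by omega⟩
      have fpos : ∀ i, i < p + 2 → 0 < f i := fun i hi => lt_of_lt_of_le (mpos _) (ih i hi).1
      have fle : ∀ i, i < p + 2 → f i ≤ h i := fun i hi => (ih i hi).2.1
      have hpos : ∀ i, i < p + 2 → 0 < h i := fun i hi => lt_of_lt_of_le (fpos i hi) (fle i hi)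
      have hlem : ∀ i, i < p + 2 → h i ≤ m i := fun i hi =>
        le_trans (ih i hi).2.2 (mmono (by omega))
      have hlem' : ∀ i, i < p + 2 → h i ≤ m (i - 1) := fun i hi => (ih i hi).2.2
      refine ⟨?_, ?_, ?_⟩
      · -- m ((p+2)/2) ≤ f (p+2)
        rw [hf _ (by omega)]
        have hne : ¬ (p + 2 = 1) := by omega
        simp only [hne, if_false, mul_zero, add_zero]
        rw [show p + 2 - 1 = p + 1 from rfl]
        have hS : (insert 1 ((Finset.Ico 1 ((p + 3) / 2)).image (fun j => 2 * j)))
            ⊆ Finset.Ico 1 (p + 2) := by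
          intro x hx
          simp only [Finset.mem_insert, Finset.mem_image, Finset.mem_Ico] at hx
          simp only [Finset.mem_Ico]
          rcases hx with rfl | ⟨j, hj, rfl⟩ <;> omega
        have h1notin : (1 : ℕ) ∉ (Finset.Ico 1 ((p + 3) / 2)).image (fun j => 2 * j) := by
          simp only [Finset.mem_image, Finset.mem_Ico]
          rintro ⟨j, hj, hj2⟩
          omega
        have hsub : (f 1 * f (p + 1 - 1)) +
              ∑ j ∈ Finset.Ico 1 ((p + 3) / 2), f (2 * j) * f (p + 1 - 2 * j)
            ≤ ∑ i ∈ Finset.Ico 1 (p + 2), f i * f (p + 1 - i) := by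
          calc (f 1 * f (p + 1 - 1)) +
                ∑ j ∈ Finset.Ico 1 ((p + 3) / 2), f (2 * j) * f (p + 1 - 2 * j)
              = ∑ i ∈ insert 1 ((Finset.Ico 1 ((p + 3) / 2)).image (fun j => 2 * j)),
                  f i * f (p + 1 - i) := by
                rw [Finset.sum_insert h1notin,
                  Finset.sum_image (by intro a _ b _ hab; simp only at hab; omega)]
            _ ≤ _ := by
                apply Finset.sum_le_sum_of_subset_of_nonneg hS
                intro i hi _
                simp only [Finset.mem_Ico] at hi
                exact mul_nonneg (fpos i (by omega)).le (fpos _ (by omega)).le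
        have hfp : m (p / 2) ≤ f 1 * f (p + 1 - 1) := by
          rw [hf1, one_mul]
          exact (ih p (by omega)).1
        rcases Nat.even_or_odd p with hp | hp
        · -- p even, p = 2k, goal m (k+1) ≤ f (p+2)
          obtain ⟨k, hk⟩ := hp
          have hnotodd : ¬ Odd (p + 2) := by rw [Nat.odd_iff]; omega
          rw [if_neg hnotodd, sub_zero]
          rw [show (p + 2) / 2 = k + 1 by omega]
          rw [show (p + 3) / 2 = k + 1 by omega] at hsub
          rw [show p / 2 = k by omega] at hfp
          have hterm : ∑ j ∈ Finset.Ico 1 (k + 1), m j * m (k - j)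
              ≤ ∑ j ∈ Finset.Ico 1 (k + 1), f (2 * j) * f (p + 1 - 2 * j) := by
            apply Finset.sum_le_sum
            intro j hj
            simp only [Finset.mem_Ico] at hj
            have h1 : m j ≤ f (2 * j) := by
              have := (ih (2 * j) (by omega)).1
              rwa [show 2 * j / 2 = j by omega] at this
            have h2 : m (k - j) ≤ f (p + 1 - 2 * j) := by
              have := (ih (p + 1 - 2 * j) (by omega)).1
              rwa [show (p + 1 - 2 * j) / 2 = k - j by omega] at this
            exact mul_le_mul h1 h2 (mpos _).le (fpos _ (by omega)).le
          have hM := msum (k + 1) (by omega)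
          simp only [Nat.add_sub_cancel] at hM
          linarith
        · -- p odd, p = 2k+1, goal m (k+1) ≤ Σ - m (k+1)
          obtain ⟨k, hk⟩ := hp
          have hodd : Odd (p + 2) := by rw [Nat.odd_iff]; omega
          rw [if_pos hodd]
          rw [show (p + 2) / 2 = k + 1 by omega, show (p + 1) / 2 = k + 1 by omega]
          rw [show (p + 3) / 2 = k + 2 by omega] at hsub
          rw [show p / 2 = k by omega] at hfp
          have hterm : ∑ j ∈ Finset.Ico 1 (k + 2), m j * m (k + 1 - j)
              ≤ ∑ j ∈ Finset.Ico 1 (k + 2), f (2 * j) * f (p + 1 - 2 * j) := by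
            apply Finset.sum_le_sum
            intro j hj
            simp only [Finset.mem_Ico] at hj
            have h1 : m j ≤ f (2 * j) := by
              have := (ih (2 * j) (by omega)).1
              rwa [show 2 * j / 2 = j by omega] at this
            have h2 : m (k + 1 - j) ≤ f (p + 1 - 2 * j) := by
              have := (ih (p + 1 - 2 * j) (by omega)).1
              rwa [show (p + 1 - 2 * j) / 2 = k + 1 - j by omega] at this
            exact mul_le_mul h1 h2 (mpos _).le (fpos _ (by omega)).le
          have hsplit2 : ∑ j ∈ Finset.Ico 1 (k + 2), m j * m (k + 1 - j)
              = (∑ j ∈ Finset.Ico 1 (k + 1), m j * m (k + 1 - j)) + m (k + 1) * m 0 := by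
            rw [Finset.sum_Ico_succ_top (by omega : 1 ≤ k + 1)]
            rw [show k + 1 - (k + 1) = 0 by omega]
          have hmono2 : ∑ j ∈ Finset.Ico 1 (k + 1), m j * m (k - j)
              ≤ ∑ j ∈ Finset.Ico 1 (k + 1), m j * m (k + 1 - j) := by
            apply Finset.sum_le_sum
            intro j hj
            exact mul_le_mul_of_nonneg_left (mmono (by omega)) (mpos _).le
          have hM := msum (k + 1) (by omega)
          simp only [Nat.add_sub_cancel] at hM
          rw [hm0, mul_one] at hsplit2
          linarith
      · -- f (p+2) ≤ h (p+2)
        rw [hf _ (by omega), hh _ (by omega)]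
        have hne : ¬ (p + 2 = 1) := by omega
        simp only [hne, if_false, mul_zero, add_zero]
        have hsum : ∑ i ∈ Finset.Ico 1 (p + 2), f i * f (p + 2 - 1 - i)
            ≤ ∑ i ∈ Finset.Ico 1 (p + 2), h i * h (p + 2 - 1 - i) := by
          apply Finset.sum_le_sum
          intro i hi
          simp only [Finset.mem_Ico] at hi
          exact mul_le_mul (fle i (by omega)) (fle _ (by omega))
            (fpos _ (by omega)).le (hpos i (by omega)).le
        have hif : (if Odd (p + 2) then h ((p + 2 - 1) / 2) else 0)
            ≤ (if Odd (p + 2) then m ((p + 2 - 1) / 2) else 0) := by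
          split
          · exact hlem _ (by omega)
          · exact le_rfl
        linarith
      · -- h (p+2) ≤ m (p+1)
        rw [hh _ (by omega)]
        have hne : ¬ (p + 2 = 1) := by omega
        simp only [hne, if_false, mul_zero, add_zero]
        rw [show p + 2 - 1 = p + 1 from rfl]
        have hif : 0 ≤ (if Odd (p + 2) then h ((p + 1) / 2) else 0) := by
          split
          · exact (hpos _ (by omega)).le
          · exact le_rfl
        have hsplit : ∑ i ∈ Finset.Ico 1 (p + 2), h i * h (p + 1 - i)
            = (∑ i ∈ Finset.Ico 1 (p + 1), h i * h (p + 1 - i)) + h (p + 1) * h 0 := by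
          rw [Finset.sum_Ico_succ_top (by omega : 1 ≤ p + 1)]
          simp
        have hbound : ∑ i ∈ Finset.Ico 1 (p + 1), h i * h (p + 1 - i)
            ≤ ∑ i ∈ Finset.range p, m i * m (p - 1 - i) := by
          have hre : ∑ i ∈ Finset.Ico 1 (p + 1), h i * h (p + 1 - i)
              = ∑ i ∈ Finset.range p, h (1 + i) * h (p + 1 - (1 + i)) := by
            rw [Finset.sum_Ico_eq_sum_range]
            norm_num
          rw [hre]
          apply Finset.sum_le_sum
          intro i hi
          simp only [Finset.mem_range] at hi
          have e1 : p + 1 - (1 + i) = p - i := by omega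
          rw [e1]
          have h1 : h (1 + i) ≤ m i := by
            have := hlem' (1 + i) (by omega)
            simpa using this
          have h2 : h (p - i) ≤ m (p - 1 - i) := by
            have := hlem' (p - i) (by omega)
            have e2 : p - i - 1 = p - 1 - i := by omega
            rwa [e2] at this
          exact mul_le_mul h1 h2 (hpos _ (by omega)).le
            ((mpos i).le.trans (le_of_eq rfl) |>.trans le_rfl)
        have hm' : m (p + 1) = m p + ∑ i ∈ Finset.range p, m i * m (p - 1 - i) := by
          have := hm (p + 1) (by omega)
          simpa using this
        have hp1 : h (p + 1) * h 0 ≤ m p := by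
          rw [hh0, mul_one]
          have := hlem' (p + 1) (by omega)
          simpa using this
        linarith
  intro n
  exact ⟨lt_of_lt_of_le (mpos _) (key n).1, (key n).2.1⟩
end

section
/- The polynomial P(x) = (1 + x)²(1 − x²) − 4x(2x + 1)(1 − x²) + 4x² has a real root x₀ with 0.3500 < x₀ < 0.3503. -/
/-- The polynomial `P(x) = (1 + x)²(1 − x²) − 4x(2x + 1)(1 − x²) + 4x²` has a
real root `x₀` with `0.3500 < x₀ < 0.3503`. -/
theorem plane12_upper_singularity :
    ∃ x₀ : ℝ, 0.3500 < x₀ ∧ x₀ < 0.3503 ∧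
      (1 + x₀) ^ 2 * (1 - x₀ ^ 2) - 4 * x₀ * (2 * x₀ + 1) * (1 - x₀ ^ 2)
        + 4 * x₀ ^ 2 = 0 := by
  set f : ℝ → ℝ := fun x => (1 + x) ^ 2 * (1 - x ^ 2) - 4 * x * (2 * x + 1) * (1 - x ^ 2)
      + 4 * x ^ 2 with hf
  have hc : ContinuousOn f (Set.Icc (0.3500 : ℝ) 0.3503) := by
    apply Continuous.continuousOn; fun_prop
  have h01 : (0 : ℝ) ∈ Set.Ioo (f 0.3503) (f 0.3500) := by
    constructor <;> · simp only [hf]; norm_num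
  have := intermediate_value_Ioo' (by norm_num : (0.3500:ℝ) ≤ 0.3503) hc h01
  obtain ⟨x₀, hx, hfx⟩ := this
  exact ⟨x₀, hx.1, hx.2, hfx⟩
end

section
/- The function D(x) = (x + 1)² − 4x(2x + 1) + (2 − 2x² − 2√(1 − 2x² − 3x⁴))/x² has a real root x₁ with 0.354 < x₁ < 0.355. -/
open Real

/-- The function `D(x) = (x + 1)² − 4x(2x + 1) + (2 − 2x² − 2√(1 − 2x² − 3x⁴))/x²`
has a real root `x₁` with `0.354 < x₁ < 0.355`. -/
theorem plane12_lower_singularity :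
    ∃ x₁ : ℝ, 0.354 < x₁ ∧ x₁ < 0.355 ∧
      (x₁ + 1) ^ 2 - 4 * x₁ * (2 * x₁ + 1)
        + (2 - 2 * x₁ ^ 2 - 2 * Real.sqrt (1 - 2 * x₁ ^ 2 - 3 * x₁ ^ 4)) / x₁ ^ 2
        = 0 := by
  set f : ℝ → ℝ := fun x => (x + 1) ^ 2 - 4 * x * (2 * x + 1)
      + (2 - 2 * x ^ 2 - 2 * Real.sqrt (1 - 2 * x ^ 2 - 3 * x ^ 4)) / x ^ 2 with hf
  have hc : ContinuousOn f (Set.Icc (0.354 : ℝ) 0.355) := by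
    apply ContinuousOn.add
    · fun_prop
    · apply ContinuousOn.div
      · apply Continuous.continuousOn
        continuity
      · fun_prop
      · intro x hx
        have h1 := hx.1
        norm_num at h1 ⊢
        nlinarith
  have hb : f 0.355 < 0 := by
    set s := Real.sqrt (1 - 2 * (0.355 : ℝ) ^ 2 - 3 * (0.355 : ℝ) ^ 4) with hs
    have hs0 : 0 ≤ s := Real.sqrt_nonneg _
    have hs2 : s ^ 2 = 1 - 2 * (0.355 : ℝ) ^ 2 - 3 * (0.355 : ℝ) ^ 4 := by
      rw [hs, sq_sqrt]; norm_num
    have hlb : (0.8367 : ℝ) < s := by nlinarith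
    have hdiv : (2 - 2 * (0.355 : ℝ) ^ 2 - 2 * s) / (0.355 : ℝ) ^ 2 < 0.592175 := by
      rw [div_lt_iff₀ (by norm_num)]
      nlinarith
    show ((0.355:ℝ) + 1) ^ 2 - 4 * 0.355 * (2 * 0.355 + 1)
        + (2 - 2 * (0.355:ℝ) ^ 2 - 2 * s) / (0.355:ℝ) ^ 2 < 0
    linarith
  have ha : 0 < f 0.354 := by
    set s := Real.sqrt (1 - 2 * (0.354 : ℝ) ^ 2 - 3 * (0.354 : ℝ) ^ 4) with hs
    have hs0 : 0 ≤ s := Real.sqrt_nonneg _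
    have hs2 : s ^ 2 = 1 - 2 * (0.354 : ℝ) ^ 2 - 3 * (0.354 : ℝ) ^ 4 := by
      rw [hs, sq_sqrt]; norm_num
    have hub : s < (0.838014 : ℝ) := by nlinarith
    have hdiv : (0.585212 : ℝ) < (2 - 2 * (0.354 : ℝ) ^ 2 - 2 * s) / (0.354 : ℝ) ^ 2 := by
      rw [lt_div_iff₀ (by norm_num)]
      nlinarith
    show 0 < ((0.354:ℝ) + 1) ^ 2 - 4 * 0.354 * (2 * 0.354 + 1)
        + (2 - 2 * (0.354:ℝ) ^ 2 - 2 * s) / (0.354:ℝ) ^ 2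
    linarith
  obtain ⟨x₁, hx₁, hfx₁⟩ := intermediate_value_Ioo' (by norm_num : (0.354 : ℝ) ≤ 0.355) hc
    (by constructor <;> [exact hb; exact ha] : (0 : ℝ) ∈ Set.Ioo (f 0.355) (f 0.354))
  exact ⟨x₁, hx₁.1, hx₁.2, hfx₁⟩
end

section
/- For all n ≥ 0, the colored binary hipster numbers satisfy 0 < h_n ≤ s_n, where s_n is the n-th little Schröder number. -/
/-- For all `n ≥ 0`, the colored binary hipster numbers satisfy `0 < h n ≤ s n`,
where `s n` is the `n`-th little Schröder number. -/
theorem colored_hipster_le_schroeder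
    (s h : ℕ → ℤ)
    (hs0 : s 0 = 1)
    (hs : ∀ n, 1 ≤ n →
      s n = 2 * (∑ i ∈ Finset.range n, s i * s (n - 1 - i)) - s (n - 1))
    (hh0 : h 0 = 1)
    (hh : ∀ n, 1 ≤ n →
      h n = 2 * (∑ i ∈ Finset.range n, h i * h (n - 1 - i)) - h (n - 1)
              - 2 * (if Odd n then h ((n - 1) / 2) else 0)
              + 2 * (if n = 1 then 1 else 0)) :
    ∀ n, 0 < h n ∧ h n ≤ s n := by
  intro n
  induction n using Nat.strong_induction_on with
  | _ n ih =>
    rcases n with _ | _ | k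
    · exact ⟨by simp [hh0], by simp [hh0, hs0]⟩
    · have e1 : h 1 = 1 := by
        have := hh 1 le_rfl
        simp [Finset.sum_range_one, hh0] at this
        linarith
      have e2 : s 1 = 1 := by
        have := hs 1 le_rfl
        simp [Finset.sum_range_one, hs0] at this
        linarith
      exact ⟨by rw [e1]; norm_num, by rw [e1, e2]⟩
    · -- n = k + 2
      set n := k + 2 with hn
      have hn1 : 1 ≤ n := by omega
      have hpos : ∀ i < n, 0 < h i := fun i hi => (ih i hi).1
      have hle : ∀ i < n, h i ≤ s i := fun i hi => (ih i hi).2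
      -- each term nonneg and dominated
      have hterm : ∀ i ∈ Finset.range n, h i * h (n - 1 - i) ≤ s i * s (n - 1 - i) := by
        intro i hi
        rw [Finset.mem_range] at hi
        have h1 : n - 1 - i < n := by omega
        exact mul_le_mul (hle i hi) (hle _ h1) (hpos _ h1).le
          (le_trans (hpos i hi).le (hle i hi))
      have htnn : ∀ i ∈ Finset.range n, (0:ℤ) ≤ h i * h (n - 1 - i) := by
        intro i hi
        rw [Finset.mem_range] at hi
        have h1 : n - 1 - i < n := by omega
        exact mul_nonneg (hpos i hi).le (hpos _ h1).le
      have hsum_le : ∑ i ∈ Finset.range n, h i * h (n - 1 - i)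
          ≤ ∑ i ∈ Finset.range n, s i * s (n - 1 - i) := Finset.sum_le_sum hterm
      -- h recurrence specialized
      have hrec := hh n hn1
      have hne1 : ¬ (n = 1) := by omega
      rw [if_neg hne1] at hrec
      have hsrec := hs n hn1
      -- key sum lower bounds
      have h0n : h 0 * h (n - 1 - 0) = h (n-1) := by simp [hh0]
      have hd : h (n-1) * h (n - 1 - (n-1)) = h (n-1) := by
        have : n - 1 - (n-1) = 0 := by omega
        rw [this, hh0, mul_one]
      rcases Nat.even_or_odd n with hev | hod
      · -- even case
        have hnodd : ¬ Odd n := by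
          rw [Nat.odd_iff]; rw [Nat.even_iff] at hev; omega
        rw [if_neg hnodd] at hrec
        -- sum ≥ f 0 + f (n-1)
        have hsub : ({0, n-1} : Finset ℕ) ⊆ Finset.range n := by
          intro x hx
          simp at hx
          rcases hx with rfl | rfl <;> simp [Finset.mem_range] <;> omega
        have hlow : h (n-1) + h (n-1) ≤ ∑ i ∈ Finset.range n, h i * h (n - 1 - i) := by
          have := Finset.sum_le_sum_of_subset_of_nonneg hsub
            (fun i hi _ => htnn i hi)
          rwa [Finset.sum_pair (by omega : (0:ℕ) ≠ n-1), h0n, hd] at this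
        have hp1 : 0 < h (n-1) := hpos _ (by omega)
        have hposn : 0 < h n := by linarith
        have hdom : s (n-1) - h (n-1) ≤ ∑ i ∈ Finset.range n, (s i * s (n-1-i)) -
            ∑ i ∈ Finset.range n, (h i * h (n-1-i)) := by
          have hmem : n - 1 ∈ Finset.range n := Finset.mem_range.mpr (by omega)
          have key : s (n-1) * s (n-1-(n-1)) - h (n-1) * h (n-1-(n-1))
              ≤ ∑ i ∈ Finset.range n, (s i * s (n-1-i) - h i * h (n-1-i)) :=
            Finset.single_le_sum (fun i hi => sub_nonneg.mpr (hterm i hi)) hmem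
          rw [Finset.sum_sub_distrib] at key
          have hsd : s (n-1) * s (n - 1 - (n-1)) = s (n-1) := by
            have he0 : n - 1 - (n-1) = 0 := by omega
            rw [he0, hs0, mul_one]
          linarith [hsd, hd]
        refine ⟨hposn, ?_⟩
        have hsh : h (n-1) ≤ s (n-1) := hle _ (by omega)
        linarith
      · -- odd case
        rw [if_pos hod] at hrec
        set m := (n-1)/2 with hm
        have hm2 : n - 1 = 2 * m := by
          rcases hod with ⟨j, hj⟩; omega
        have hm1 : 1 ≤ m := by omega
        have hmn : m < n := by omega
        have hsub : ({0, m, n-1} : Finset ℕ) ⊆ Finset.range n := by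
          intro x hx
          simp at hx
          rcases hx with rfl | rfl | rfl <;> simp [Finset.mem_range] <;> omega
        have hfm : h m * h (n - 1 - m) = h m * h m := by
          have : n - 1 - m = m := by omega
          rw [this]
        have hlow : h (n-1) + (h m * h m + h (n-1))
            ≤ ∑ i ∈ Finset.range n, h i * h (n - 1 - i) := by
          have hstep := Finset.sum_le_sum_of_subset_of_nonneg hsub
            (fun i hi _ => htnn i hi)
          rw [show ({0, m, n-1} : Finset ℕ) = insert 0 {m, n-1} from rfl,
            Finset.sum_insert (by simp; omega),
            Finset.sum_pair (by omega : m ≠ n-1), h0n, hfm, hd] at hstep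
          linarith
        have hp1 : 0 < h (n-1) := hpos _ (by omega)
        have hpm : 0 < h m := hpos _ hmn
        have hposn : 0 < h n := by nlinarith
        have hdom : s (n-1) - h (n-1) ≤ ∑ i ∈ Finset.range n, (s i * s (n-1-i)) -
            ∑ i ∈ Finset.range n, (h i * h (n-1-i)) := by
          have hmem : n - 1 ∈ Finset.range n := Finset.mem_range.mpr (by omega)
          have key : s (n-1) * s (n-1-(n-1)) - h (n-1) * h (n-1-(n-1))
              ≤ ∑ i ∈ Finset.range n, (s i * s (n-1-i) - h i * h (n-1-i)) :=
            Finset.single_le_sum (fun i hi => sub_nonneg.mpr (hterm i hi)) hmem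
          rw [Finset.sum_sub_distrib] at key
          have hsd : s (n-1) * s (n - 1 - (n-1)) = s (n-1) := by
            have he0 : n - 1 - (n-1) = 0 := by omega
            rw [he0, hs0, mul_one]
          linarith [hsd, hd]
        refine ⟨hposn, ?_⟩
        have hsh : h (n-1) ≤ s (n-1) := hle _ (by omega)
        linarith
end

section
/- For all n ≥ 0, 0 < f_n and f_n ≤ h_n, where (f_n) is the sequence obtained from the colored binary hipster recurrence by replacing the subtracted h-term with the corresponding little Schröder number. -/
/-- For all `n ≥ 0`, `0 < f n` and `f n ≤ h n`, where `f` is obtained from the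
colored binary hipster recurrence by replacing the subtracted `h`-term with the
corresponding little Schröder number. -/
theorem colored_hipster_lower_approx
    (s h f : ℕ → ℤ)
    (hs0 : s 0 = 1)
    (hs : ∀ n, 1 ≤ n →
      s n = 2 * (∑ i ∈ Finset.range n, s i * s (n - 1 - i)) - s (n - 1))
    (hh0 : h 0 = 1)
    (hh : ∀ n, 1 ≤ n →
      h n = 2 * (∑ i ∈ Finset.range n, h i * h (n - 1 - i)) - h (n - 1)
              - 2 * (if Odd n then h ((n - 1) / 2) else 0)
              + 2 * (if n = 1 then 1 else 0))
    (hf0 : f 0 = 1)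
    (hf : ∀ n, 1 ≤ n →
      f n = 2 * (∑ i ∈ Finset.range n, f i * f (n - 1 - i)) - f (n - 1)
              - 2 * (if Odd n then s ((n - 1) / 2) else 0)
              + 2 * (if n = 1 then 1 else 0)) :
    ∀ n, 0 < f n ∧ f n ≤ h n := by
  suffices H : ∀ n : ℕ, 0 < f n ∧ f n ≤ h n ∧ h n ≤ s n ∧
      (∀ j, j ≤ n → f j ≤ f n) ∧ (∀ m, n = 2 * m → s m ≤ f n) by
    exact fun n => ⟨(H n).1, (H n).2.1⟩
  intro n
  induction n using Nat.strong_induction_on with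
  | _ n IH =>
  have Fpos : ∀ k, k < n → 0 < f k := fun k hk => (IH k hk).1
  have FH : ∀ k, k < n → f k ≤ h k := fun k hk => (IH k hk).2.1
  have HSle : ∀ k, k < n → h k ≤ s k := fun k hk => (IH k hk).2.2.1
  have Fmono : ∀ k, k < n → ∀ j, j ≤ k → f j ≤ f k := fun k hk => (IH k hk).2.2.2.1
  have SF : ∀ k, k < n → ∀ m, k = 2 * m → s m ≤ f k := fun k hk => (IH k hk).2.2.2.2
  have Hpos : ∀ k, k < n → 0 < h k := fun k hk => lt_of_lt_of_le (Fpos k hk) (FH k hk)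
  have Spos : ∀ k, k < n → 0 < s k := fun k hk => lt_of_lt_of_le (Hpos k hk) (HSle k hk)
  by_cases h0 : n = 0
  · subst h0
    refine ⟨by rw [hf0]; norm_num, by rw [hf0, hh0], by rw [hh0, hs0],
      fun j hj => by interval_cases j; exact le_rfl,
      fun m hm => by
        have hm0 : m = 0 := by omega
        subst hm0
        simp [hs0, hf0]⟩
  by_cases h1 : n = 1
  · subst h1
    have e1 : f 1 = 1 := by
      rw [hf 1 le_rfl]
      simp [Finset.sum_range_one, hf0, hs0]
    have eh1 : h 1 = 1 := by
      rw [hh 1 le_rfl]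
      simp [Finset.sum_range_one, hh0]
    have es1 : s 1 = 1 := by
      rw [hs 1 le_rfl]
      simp [Finset.sum_range_one, hs0]
    refine ⟨by rw [e1]; norm_num, by rw [e1, eh1], by rw [eh1, es1],
      fun j hj => by interval_cases j <;> simp [hf0, e1],
      fun m hm => by omega⟩
  have hn2 : 2 ≤ n := by omega
  have hn1 : 1 ≤ n := by omega
  -- nonnegativity of convolution terms
  have Tnn : ∀ i ∈ Finset.range n, 0 ≤ f i * f (n - 1 - i) := by
    intro i hi
    have hi' : i < n := Finset.mem_range.mp hi
    exact mul_nonneg (Fpos i hi').le (Fpos (n - 1 - i) (by omega)).le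
  have Unn : ∀ i ∈ Finset.range n, 0 ≤ h i * h (n - 1 - i) := by
    intro i hi
    have hi' : i < n := Finset.mem_range.mp hi
    exact mul_nonneg (Hpos i hi').le (Hpos (n - 1 - i) (by omega)).le
  -- lower bound for the f-convolution
  have hTlb : f (n - 1) + f (n - 1) ≤ ∑ i ∈ Finset.range n, f i * f (n - 1 - i) := by
    have hsub : ({0, n - 1} : Finset ℕ) ⊆ Finset.range n := by
      intro x hx
      simp only [Finset.mem_insert, Finset.mem_singleton] at hx
      rcases hx with rfl | rfl <;> simp [Finset.mem_range] <;> omega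
    have hpair : ∑ i ∈ ({0, n - 1} : Finset ℕ), f i * f (n - 1 - i)
        = f 0 * f (n - 1 - 0) + f (n - 1) * f (n - 1 - (n - 1)) :=
      Finset.sum_pair (by omega)
    have hle := Finset.sum_le_sum_of_subset_of_nonneg hsub (fun i hi _ => Tnn i hi)
    rw [hpair] at hle
    rw [Nat.sub_zero, Nat.sub_self, hf0] at hle
    linarith
  have iteS_le : (if Odd n then s ((n - 1) / 2) else 0) ≤ f (n - 1) := by
    by_cases ho : Odd n
    · rw [if_pos ho]
      obtain ⟨k, hk⟩ := ho
      have hk2 : (n - 1) / 2 = k := by omega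
      rw [hk2]
      exact SF (n - 1) (by omega) k (by omega)
    · rw [if_neg ho]; exact (Fpos (n - 1) (by omega)).le
  have iteS_nn : 0 ≤ (if Odd n then s ((n - 1) / 2) else 0) := by
    by_cases ho : Odd n
    · rw [if_pos ho]; exact (Spos ((n - 1) / 2) (by omega)).le
    · rw [if_neg ho]
  have fn_eq : f n = 2 * (∑ i ∈ Finset.range n, f i * f (n - 1 - i)) - f (n - 1)
      - 2 * (if Odd n then s ((n - 1) / 2) else 0) := by
    rw [hf n hn1, if_neg h1]; ring
  have fmono_step : f (n - 1) ≤ f n := by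
    rw [fn_eq]; linarith
  have fpos : 0 < f n := lt_of_lt_of_le (Fpos (n - 1) (by omega)) fmono_step
  -- f n ≤ h n
  have hfh : f n ≤ h n := by
    have hUT : h (n - 1) - f (n - 1) ≤
        (∑ i ∈ Finset.range n, h i * h (n - 1 - i)) - (∑ i ∈ Finset.range n, f i * f (n - 1 - i)) := by
      have key : ∀ i ∈ Finset.range n,
          (0 : ℤ) ≤ h i * h (n - 1 - i) - f i * f (n - 1 - i) := by
        intro i hi
        have hi' : i < n := Finset.mem_range.mp hi
        have hj : n - 1 - i < n := by omega
        have := mul_le_mul (FH i hi') (FH (n - 1 - i) hj)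
          (Fpos (n - 1 - i) hj).le (Hpos i hi').le
        linarith
      have hmem : (0 : ℕ) ∈ Finset.range n := Finset.mem_range.mpr (by omega)
      have hsingle := Finset.single_le_sum key hmem
      rw [Finset.sum_sub_distrib] at hsingle
      rw [hf0, hh0, Nat.sub_zero] at hsingle
      linarith
    have iteHS : (if Odd n then h ((n - 1) / 2) else 0) ≤ (if Odd n then s ((n - 1) / 2) else 0) := by
      by_cases ho : Odd n
      · rw [if_pos ho, if_pos ho]; exact HSle ((n - 1) / 2) (by omega)
      · rw [if_neg ho, if_neg ho]
    have hhn : h n = 2 * (∑ i ∈ Finset.range n, h i * h (n - 1 - i)) - h (n - 1)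
        - 2 * (if Odd n then h ((n - 1) / 2) else 0) := by
      rw [hh n hn1, if_neg h1]; ring
    have hfle : f (n - 1) ≤ h (n - 1) := FH (n - 1) (by omega)
    rw [fn_eq, hhn]; linarith
  -- h n ≤ s n
  have hhs : h n ≤ s n := by
    have hVU : s (n - 1) - h (n - 1) ≤
        (∑ i ∈ Finset.range n, s i * s (n - 1 - i)) - (∑ i ∈ Finset.range n, h i * h (n - 1 - i)) := by
      have key : ∀ i ∈ Finset.range n,
          (0 : ℤ) ≤ s i * s (n - 1 - i) - h i * h (n - 1 - i) := by
        intro i hi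
        have hi' : i < n := Finset.mem_range.mp hi
        have hj : n - 1 - i < n := by omega
        have := mul_le_mul (HSle i hi') (HSle (n - 1 - i) hj)
          (Hpos (n - 1 - i) hj).le (Spos i hi').le
        linarith
      have hmem : (0 : ℕ) ∈ Finset.range n := Finset.mem_range.mpr (by omega)
      have hsingle := Finset.single_le_sum key hmem
      rw [Finset.sum_sub_distrib] at hsingle
      rw [hs0, hh0, Nat.sub_zero] at hsingle
      linarith
    have iteH_nn : 0 ≤ (if Odd n then h ((n - 1) / 2) else 0) := by
      by_cases ho : Odd n
      · rw [if_pos ho]; exact (Hpos ((n - 1) / 2) (by omega)).le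
      · rw [if_neg ho]
    have hhn : h n = 2 * (∑ i ∈ Finset.range n, h i * h (n - 1 - i)) - h (n - 1)
        - 2 * (if Odd n then h ((n - 1) / 2) else 0) := by
      rw [hh n hn1, if_neg h1]; ring
    have hhle : h (n - 1) ≤ s (n - 1) := HSle (n - 1) (by omega)
    rw [hhn, hs n hn1]; linarith
  refine ⟨fpos, hfh, hhs, ?_, ?_⟩
  · intro j hj
    rcases eq_or_lt_of_le hj with rfl | hj'
    · exact le_rfl
    · exact (Fmono (n - 1) (by omega) j (by omega)).trans fmono_step
  · -- s m ≤ f n when n = 2*m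
    intro m hm
    have hm1 : 1 ≤ m := by omega
    subst hm
    have hsm : s m = 2 * (∑ i ∈ Finset.range m, s i * s (m - 1 - i)) - s (m - 1) := hs m hm1
    have step1 : (∑ i ∈ Finset.range m, s i * s (m - 1 - i)) ≤
        ∑ i ∈ Finset.range m, f (2 * i) * f (2 * m - 1 - 2 * i) := by
      refine Finset.sum_le_sum ?_
      intro i hi
      have him : i < m := Finset.mem_range.mp hi
      have h1' : s i ≤ f (2 * i) := SF (2 * i) (by omega) i rfl
      have h2' : s (m - 1 - i) ≤ f (2 * (m - 1 - i)) := SF (2 * (m - 1 - i)) (by omega) (m - 1 - i) rfl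
      have h3' : f (2 * (m - 1 - i)) ≤ f (2 * m - 1 - 2 * i) :=
        Fmono (2 * m - 1 - 2 * i) (by omega) (2 * (m - 1 - i)) (by omega)
      exact mul_le_mul h1' (h2'.trans h3') (Spos (m - 1 - i) (by omega)).le (Fpos (2 * i) (by omega)).le
    have step2 : (∑ i ∈ Finset.range m, f (2 * i) * f (2 * m - 1 - 2 * i)) + f (2 * m - 1)
        ≤ ∑ j ∈ Finset.range (2 * m), f j * f (2 * m - 1 - j) := by
      have himg : ∑ j ∈ (Finset.range m).image (fun i => 2 * i), f j * f (2 * m - 1 - j)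
          = ∑ i ∈ Finset.range m, f (2 * i) * f (2 * m - 1 - 2 * i) :=
        Finset.sum_image (by intro x _ y _ hxy; simp only at hxy; omega)
      have hnotmem : 2 * m - 1 ∉ (Finset.range m).image (fun i => 2 * i) := by
        simp only [Finset.mem_image, Finset.mem_range]
        rintro ⟨i, hi, hieq⟩
        omega
      have hins : ∑ j ∈ insert (2 * m - 1) ((Finset.range m).image (fun i => 2 * i)),
            f j * f (2 * m - 1 - j)
          = f (2 * m - 1) * f (2 * m - 1 - (2 * m - 1))
            + ∑ j ∈ (Finset.range m).image (fun i => 2 * i), f j * f (2 * m - 1 - j) :=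
        Finset.sum_insert hnotmem
      have hzero : 2 * m - 1 - (2 * m - 1) = 0 := Nat.sub_self _
      rw [hzero, hf0, mul_one, himg] at hins
      have hsubset : insert (2 * m - 1) ((Finset.range m).image (fun i => 2 * i))
          ⊆ Finset.range (2 * m) := by
        intro x hx
        simp only [Finset.mem_insert, Finset.mem_image, Finset.mem_range] at hx ⊢
        rcases hx with rfl | ⟨i, hi, rfl⟩ <;> omega
      have hnn : ∀ j ∈ Finset.range (2 * m),
          j ∉ insert (2 * m - 1) ((Finset.range m).image (fun i => 2 * i)) →
          (0 : ℤ) ≤ f j * f (2 * m - 1 - j) := by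
        intro j hj _
        have hj' : j < 2 * m := Finset.mem_range.mp hj
        exact mul_nonneg (Fpos j (by omega)).le (Fpos (2 * m - 1 - j) (by omega)).le
      have := Finset.sum_le_sum_of_subset_of_nonneg hsubset hnn
      rw [hins] at this
      linarith
    have hfn : f (2 * m) = 2 * (∑ j ∈ Finset.range (2 * m), f j * f (2 * m - 1 - j))
        - f (2 * m - 1) := by
      rw [hf (2 * m) (by omega)]
      rw [if_neg (by rw [Nat.odd_iff]; omega), if_neg (by omega : ¬ 2 * m = 1)]
      ring
    have hsm1 : 0 < s (m - 1) := Spos (m - 1) (by omega)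
    have hf2m1 : 0 < f (2 * m - 1) := Fpos (2 * m - 1) (by omega)
    rw [hsm, hfn]
    linarith
end

section
/- For all n ≥ 0, h_n ≤ g_n, where (g_n) is the sequence obtained from the colored binary hipster recurrence by replacing the subtracted term 2h_k with ℓ_k, the number of colored binary trees on k vertices in which every vertex has at most one child (ℓ_0 = 0 and ℓ_k = 3^{k-1} for k ≥ 1). -/
/-- For all `n ≥ 0`, `h n ≤ g n`, where `g` is obtained from the colored binary
hipster recurrence by replacing the subtracted term `2·h k` with `ℓ k`, the
number of colored binary trees on `k` vertices in which every vertex has at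
most one child (`ℓ 0 = 0` and `ℓ k = 3^(k-1)` for `k ≥ 1`). -/
theorem colored_hipster_upper_approx
    (h g : ℕ → ℤ)
    (ℓ : ℕ → ℤ)
    (hℓ0 : ℓ 0 = 0)
    (hℓ : ∀ k, 1 ≤ k → ℓ k = 3 ^ (k - 1))
    (hh0 : h 0 = 1)
    (hh : ∀ n, 1 ≤ n →
      h n = 2 * (∑ i ∈ Finset.range n, h i * h (n - 1 - i)) - h (n - 1)
              - 2 * (if Odd n then h ((n - 1) / 2) else 0)
              + 2 * (if n = 1 then 1 else 0))
    (hg0 : g 0 = 1)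
    (hg : ∀ n, 1 ≤ n →
      g n = 2 * (∑ i ∈ Finset.range n, g i * g (n - 1 - i)) - g (n - 1)
              - (if Odd n then ℓ ((n - 1) / 2) else 0)
              + 2 * (if n = 1 then 1 else 0)) :
    ∀ n, h n ≤ g n := by
  -- Step 1: `3^(n-1) ≤ h n` (with truncated subtraction, so `1 ≤ h 0` too).
  have hlow : ∀ n, (3:ℤ) ^ (n - 1) ≤ h n := by
    intro n
    induction n using Nat.strong_induction_on with
    | _ n ih =>
      have hone : ∀ m, m < n → (1:ℤ) ≤ h m := by
        intro m hm
        exact le_trans (one_le_pow₀ (by norm_num)) (ih m hm)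
      rcases Nat.eq_zero_or_pos n with h0 | hn1
      · simp [h0, hh0]
      rcases eq_or_lt_of_le (Nat.succ_le_of_lt hn1) with h1 | hn2
      · -- n = 1
        have h1' : n = 1 := h1.symm
        subst h1'
        have e := hh 1 le_rfl
        simp [Finset.sum_range_one, hh0, Nat.odd_iff] at e
        rw [e]; norm_num
      -- n ≥ 2
      have hn2 : 2 ≤ n := hn2
      have e := hh n hn1
      have hn1' : n ≠ 1 := by omega
      have hterm : ∀ i ∈ Finset.range n, (0:ℤ) ≤ h i * h (n - 1 - i) := by
        intro i hi
        simp only [Finset.mem_range] at hi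
        have := hone i hi
        have := hone (n - 1 - i) (by omega)
        nlinarith
      have hpow : (3:ℤ) ^ (n - 1) = 3 * 3 ^ (n - 2) := by
        have : n - 1 = (n - 2) + 1 := by omega
        rw [this, pow_succ]; ring
      have hhn1 : (3:ℤ) ^ (n - 2) ≤ h (n - 1) := by
        have := ih (n - 1) (by omega)
        simpa [Nat.sub_sub] using this
      by_cases hodd : Odd n
      · -- n odd, n ≥ 3
        have hn3 : 3 ≤ n := by
          rcases hodd with ⟨t, ht⟩; omega
        set k := (n - 1) / 2 with hk
        have hk2 : n - 1 = 2 * k := by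
          rcases hodd with ⟨t, ht⟩; omega
        have hkn : k < n - 1 := by omega
        have hk1 : 1 ≤ k := by omega
        have hsub : ({0, k, n - 1} : Finset ℕ) ⊆ Finset.range n := by
          intro i hi
          simp only [Finset.mem_insert, Finset.mem_singleton] at hi
          simp only [Finset.mem_range]
          omega
        have hsum : ∑ i ∈ ({0, k, n - 1} : Finset ℕ), h i * h (n - 1 - i)
            ≤ ∑ i ∈ Finset.range n, h i * h (n - 1 - i) :=
          Finset.sum_le_sum_of_subset_of_nonneg hsub (fun i hi _ => hterm i hi)
        have hset : ∑ i ∈ ({0, k, n - 1} : Finset ℕ), h i * h (n - 1 - i)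
            = h 0 * h (n - 1) + h k * h k + h (n - 1) * h 0 := by
          rw [Finset.sum_insert (by simp; omega), Finset.sum_insert (by simp; omega),
            Finset.sum_singleton]
          have e1 : n - 1 - 0 = n - 1 := by omega
          have e2 : n - 1 - k = k := by omega
          have e3 : n - 1 - (n - 1) = 0 := by omega
          rw [e1, e2, e3]; ring
        have hhk := hone k (by omega)
        have hhn := hone (n - 1) (by omega)
        rw [e, if_pos hodd, if_neg hn1']
        rw [hset, hh0] at hsum
        rw [hpow]
        nlinarith [hsum, hhk, hhn, hhn1]
      · -- n even
        have hsub : ({0, n - 1} : Finset ℕ) ⊆ Finset.range n := by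
          intro i hi
          simp only [Finset.mem_insert, Finset.mem_singleton] at hi
          simp only [Finset.mem_range]
          omega
        have hsum : ∑ i ∈ ({0, n - 1} : Finset ℕ), h i * h (n - 1 - i)
            ≤ ∑ i ∈ Finset.range n, h i * h (n - 1 - i) :=
          Finset.sum_le_sum_of_subset_of_nonneg hsub (fun i hi _ => hterm i hi)
        have hset : ∑ i ∈ ({0, n - 1} : Finset ℕ), h i * h (n - 1 - i)
            = h 0 * h (n - 1) + h (n - 1) * h 0 := by
          rw [Finset.sum_insert (by simp; omega), Finset.sum_singleton]
          have e1 : n - 1 - 0 = n - 1 := by omega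
          have e3 : n - 1 - (n - 1) = 0 := by omega
          rw [e1, e3]
        have hhn := hone (n - 1) (by omega)
        rw [e, if_neg hodd, if_neg hn1']
        rw [hset, hh0] at hsum
        rw [hpow]
        nlinarith [hsum, hhn, hhn1]
  have hone : ∀ m, (1:ℤ) ≤ h m := fun m =>
    le_trans (one_le_pow₀ (by norm_num)) (hlow m)
  -- Step 2: main claim by strong induction.
  intro n
  induction n using Nat.strong_induction_on with
  | _ n ih =>
    rcases Nat.eq_zero_or_pos n with h0 | hn1
    · simp [h0, hh0, hg0]
    have eh := hh n hn1
    have eg := hg n hn1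
    -- sum comparison
    have hterm : ∀ i ∈ Finset.range n, (0:ℤ) ≤ g i * g (n - 1 - i) - h i * h (n - 1 - i) := by
      intro i hi
      simp only [Finset.mem_range] at hi
      have h1 := hone i
      have h2 := hone (n - 1 - i)
      have h3 := ih i hi
      have h4 := ih (n - 1 - i) (by omega)
      nlinarith
    have hsingle : g 0 * g (n - 1 - 0) - h 0 * h (n - 1 - 0)
        ≤ ∑ i ∈ Finset.range n, (g i * g (n - 1 - i) - h i * h (n - 1 - i)) :=
      Finset.single_le_sum hterm (by simp [Finset.mem_range]; omega)
    rw [Finset.sum_sub_distrib] at hsingle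
    simp only [Nat.sub_zero, hh0, hg0, one_mul] at hsingle
    have hgh : h (n - 1) ≤ g (n - 1) := ih (n - 1) (by omega)
    -- the ℓ term
    have hell : (if Odd n then ℓ ((n - 1) / 2) else 0) ≤
        2 * (if Odd n then h ((n - 1) / 2) else 0) := by
      by_cases hodd : Odd n
      · rw [if_pos hodd, if_pos hodd]
        set k := (n - 1) / 2 with hk
        rcases Nat.eq_zero_or_pos k with hk0 | hk1
        · rw [hk0, hℓ0]
          have := hone 0
          linarith
        · rw [hℓ k hk1]
          have h1 := hlow k
          have h2 := hone k
          linarith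
      · simp [hodd]
    by_cases h1 : n = 1
    · subst h1
      rw [eh, eg]
      simp only [Finset.sum_range_one, Nat.odd_iff] at *
      norm_num [hh0, hg0, hℓ0]
    · rw [eh, eg, if_neg h1]
      linarith [hsingle, hgh, hell]
end
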